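/- arXiv:1311.0213 — 4 statements merged into one kernel-verified Lean document; each statement's English description precedes it below -/
import Mathlib

section
/- Let f be an orientation-preserving homeomorphism of the circle T = R/Z. Then the polynomial entropy h_pol(f) belongs to {0,1}, and h_pol(f) = 0 if and only if f is topologically conjugate to a rotation of T. -/
open Filter Metric Set

variable {Z : Type*} [MetricSpace Z]

/-- The dynamical metric `d_n^f(x,y) = max_{0 ≤ k ≤ n-1} d(f^k x, f^k y)`. -/
noncomputable def dynDist (f : Z → Z) (n : ℕ) (x y : Z) : ℝ :=
  ((Finset.range n).sup fun k => nndist (f^[k] x) (f^[k] y) : NNReal)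

/-- `G_n^f(Y,ε)`: the minimal number of balls of radius `ε` for the metric `d_n^f`
needed to cover `Y`. -/
noncomputable def coverNum (f : Z → Z) (n : ℕ) (Y : Set Z) (ε : ℝ) : ℕ :=
  sInf {m : ℕ | ∃ s : Finset Z, s.card = m ∧
    Y ⊆ ⋃ c ∈ s, {y : Z | dynDist f n c y ≤ ε}}

/-- The polynomial entropy of `f` on `Y`:
`h_pol(f,Y) = lim_{ε→0} limsup_{n→∞} log G_n^f(Y,ε) / log n`
(realized, by antitonicity in `ε`, as the supremum over `ε > 0`). -/
noncomputable def hpolOn (f : Z → Z) (Y : Set Z) : EReal :=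
  ⨆ ε : {e : ℝ // 0 < e}, Filter.atTop.limsup
    (fun n : ℕ => ((Real.log (coverNum f n Y ε.1) / Real.log n : ℝ) : EReal))

/-- The polynomial entropy of `f`. -/
noncomputable def hpol (f : Z → Z) : EReal := hpolOn f Set.univ

/-- The circle `𝕋 = ℝ/ℤ`. -/
abbrev Circle1 : Type := AddCircle (1 : ℝ)

/-- `f` is topologically conjugate to a rotation of the circle. -/
def ConjRotCircle (f : Circle1 ≃ₜ Circle1) : Prop :=
  ∃ (h : Circle1 ≃ₜ Circle1) (a : Circle1), ∀ x : Circle1, h (f (h.symm x)) = x + a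


/-!
Lift `f` to a degree-one map `F` of `ℝ`. The level sets of the Birkhoff sum `∑_{k<n} F^k` cut the
circle into `⌈n/ε⌉` arcs on each of which every `F^k`, `k < n`, moves by at most `ε`, so
`G_n(ε) ≤ n/ε + 2` and `h_pol(f) ≤ 1`. If `h` conjugates `f` to a rotation, which is an isometry,
the `h⁻¹`-image of one fine net is an `ε`-cover for every `d_n`, so `G_n(ε)` is bounded and
`h_pol(f) = 0`.

Otherwise `f⁻¹` has a non-recurrent point `c`, and `c, f⁻¹ c, …, f⁻⁽ⁿ⁻¹⁾ c` are `n` points uniformly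
separated for `d_n`, so `h_pol(f) ≥ 1`. That a circle homeomorphism is either conjugate to a
rotation or has a non-recurrent point follows Poincaré's classification. For an irrational
rotation number `τ` the monotone semiconjugacy `H` to `x ↦ x + τ` has a range invariant under the
dense group `ℤ + ℤ τ`, hence is continuous; it is a conjugacy unless it is constant on an interval,
whose midpoint is then non-recurrent. For a rotation number `p/q` either `F^q = id + p`, and
averaging `F^k`, `k < q`, conjugates `f` to the rotation by `p/q`, or some non-periodic point is
attracted by `f^q` to a periodic one.
-/

open Function Topology

section DynamicalMetric

variable {f : Z → Z} {n : ℕ}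

lemma dist_iterate_le_dynDist {k : ℕ} (hk : k < n) (x y : Z) :
    dist (f^[k] x) (f^[k] y) ≤ dynDist f n x y := by
  rw [dist_nndist, dynDist, NNReal.coe_le_coe]
  exact Finset.le_sup (f := fun k => nndist (f^[k] x) (f^[k] y)) (Finset.mem_range.2 hk)

lemma dynDist_le_of_forall {x y : Z} {ε : ℝ} (hε : 0 ≤ ε)
    (h : ∀ k < n, dist (f^[k] x) (f^[k] y) ≤ ε) : dynDist f n x y ≤ ε := by
  rw [dynDist, ← NNReal.coe_mk ε hε, NNReal.coe_le_coe, Finset.sup_le_iff]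
  intro k hk
  rw [← NNReal.coe_le_coe, coe_nndist]
  exact h k (Finset.mem_range.1 hk)

@[simp] lemma dynDist_self (x : Z) : dynDist f n x x = 0 := by
  simp [dynDist]

lemma dynDist_comm (x y : Z) : dynDist f n x y = dynDist f n y x := by
  simp only [dynDist, nndist_comm]

lemma dynDist_triangle (x y z : Z) : dynDist f n x z ≤ dynDist f n x y + dynDist f n y z := by
  rw [dynDist, dynDist, dynDist, ← NNReal.coe_add, NNReal.coe_le_coe]
  refine Finset.sup_le fun k hk => (nndist_triangle _ (f^[k] y) _).trans ?_
  exact add_le_add (Finset.le_sup (f := fun k => nndist (f^[k] x) (f^[k] y)) hk)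
    (Finset.le_sup (f := fun k => nndist (f^[k] y) (f^[k] z)) hk)

lemma continuous_dynDist (hf : Continuous f) (x : Z) : Continuous (dynDist f n x) :=
  NNReal.continuous_coe.comp <| Continuous.finset_sup_apply fun k _ =>
    continuous_const.nndist (hf.iterate k)

lemma coverNum_le_card {Y : Set Z} {ε : ℝ} (s : Finset Z)
    (h : Y ⊆ ⋃ c ∈ s, {y | dynDist f n c y ≤ ε}) : coverNum f n Y ε ≤ s.card :=
  Nat.sInf_le ⟨s, rfl, h⟩

lemma exists_finset_cover [CompactSpace Z] (hf : Continuous f) (n : ℕ) {ε : ℝ} (hε : 0 < ε) :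
    ∃ s : Finset Z, univ ⊆ ⋃ c ∈ s, {y | dynDist f n c y ≤ ε} := by
  obtain ⟨s, -, hs⟩ := isCompact_univ.elim_nhds_subcover (fun c => {y | dynDist f n c y < ε})
    fun c _ => (isOpen_lt (continuous_dynDist hf c) continuous_const).mem_nhds <| by
      simpa using hε
  exact ⟨s, hs.trans <| iUnion₂_mono fun c _ y (hy : _ < ε) => hy.le⟩

lemma card_le_coverNum_of_pairwise [CompactSpace Z] (hf : Continuous f) {ε : ℝ} (hε : 0 < ε)
    {ι : Type*} [Fintype ι] {p : ι → Z} (hp : Pairwise fun i j => 2 * ε < dynDist f n (p i) (p j)) :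
    Fintype.card ι ≤ coverNum f n univ ε := by
  obtain ⟨s₀, hs₀⟩ := exists_finset_cover hf n hε
  obtain ⟨s, hcard, hs⟩ := Nat.sInf_mem (s := {m | ∃ s : Finset Z, s.card = m ∧
    univ ⊆ ⋃ c ∈ s, {y | dynDist f n c y ≤ ε}}) ⟨_, s₀, rfl, hs₀⟩
  rw [coverNum, ← hcard]
  have hcenter (i : ι) : ∃ c ∈ s, dynDist f n c (p i) ≤ ε := by
    simpa using hs (mem_univ (p i))
  choose c hcs hcp using hcenter
  have hc : Injective c := fun i j hij => by
    by_contra hne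
    have := (hp hne).trans_le <| (dynDist_triangle _ (c i) _).trans <|
      add_le_add ((dynDist_comm _ _).trans_le (hcp i)) (hij ▸ hcp j)
    linarith
  rw [← Finset.card_univ]
  exact Finset.card_le_card_of_injOn c (fun i _ => hcs i) hc.injOn

end DynamicalMetric

section Recurrence

variable {X : Type*} [TopologicalSpace X]

def IsRecurrentPt (g : X → X) (x : X) : Prop :=
  x ∈ closure (range fun m => g^[m + 1] x)

lemma not_isRecurrentPt_iff {Y : Type*} [MetricSpace Y] {g : Y → Y} {x : Y} :
    ¬IsRecurrentPt g x ↔ ∃ δ > 0, ∀ m, δ ≤ dist (g^[m + 1] x) x := by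
  simp [IsRecurrentPt, Metric.mem_closure_iff, dist_comm]

/-- The closure of the forward orbit only adds the limits `g^[r + 1] L`, `r < q`, which are
periodic. -/
lemma not_isRecurrentPt_of_tendsto [T2Space X] {g : X → X} (hg : Continuous g) {q : ℕ}
    (hq : 0 < q) {x L : X} (hL : Tendsto (fun s => (g^[q])^[s] x) atTop (𝓝 L))
    (hx : ∀ m, g^[m + 1] x ≠ x) : ¬IsRecurrentPt g x := by
  have hLfix : g^[q] L = L := isFixedPt_of_tendsto_iterate hL (hg.iterate q).continuousAt
  have hiter (r s : ℕ) : g^[r + 1] ((g^[q])^[s] x) = g^[q * s + r + 1] x := by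
    rw [← iterate_mul, ← iterate_add_apply, Nat.add_right_comm, add_comm r]
  have horbit : range (fun m => g^[m + 1] x) ⊆
      ⋃ r ∈ Finset.range q, insert (g^[r + 1] L) (range fun s => g^[r + 1] ((g^[q])^[s] x)) := by
    rintro _ ⟨m, rfl⟩
    refine mem_biUnion (Finset.mem_range.2 (Nat.mod_lt m hq)) (mem_insert_of_mem _ ⟨m / q, ?_⟩)
    simp only [hiter, Nat.div_add_mod]
  have hclosed : IsClosed (⋃ r ∈ Finset.range q,
      insert (g^[r + 1] L) (range fun s => g^[r + 1] ((g^[q])^[s] x))) :=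
    isClosed_biUnion_finset fun r _ =>
      (((hg.iterate (r + 1)).tendsto L).comp hL).isCompact_insert_range.isClosed
  intro hrec
  obtain ⟨r, -, hr⟩ := mem_iUnion₂.1 (closure_minimal horbit hclosed hrec)
  rcases hr with hr | ⟨s, hs⟩
  · apply hx (q - 1)
    rw [Nat.sub_add_cancel hq]
    nth_rewrite 1 [hr]
    rw [← iterate_add_apply, add_comm, iterate_add_apply, hLfix, ← hr]
  · exact hx (q * s + r) ((hiter r s).symm.trans hs)

end Recurrence

lemma exists_forall_le_coverNum [CompactSpace Z] (f : Z ≃ₜ Z) {c : Z}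
    (hc : ¬IsRecurrentPt f.symm c) : ∃ ε > 0, ∀ n, n ≤ coverNum f n univ ε := by
  obtain ⟨δ, hδ, hfar⟩ := not_isRecurrentPt_iff.1 hc
  refine ⟨δ / 3, by positivity, fun n => ?_⟩
  have hsep {i j : ℕ} (hij : i < j) (hj : j < n) :
      δ ≤ dynDist f n ((⇑f.symm)^[i] c) ((⇑f.symm)^[j] c) := by
    obtain ⟨d, rfl⟩ := Nat.exists_eq_add_of_lt hij
    calc δ ≤ dist c ((⇑f.symm)^[d + 1] c) := dist_comm c _ ▸ hfar d
      _ = dist (f^[i] ((⇑f.symm)^[i] c)) (f^[i] ((⇑f.symm)^[i + d + 1] c)) := by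
        have hinv := LeftInverse.iterate f.apply_symm_apply i
        rw [add_assoc, iterate_add_apply (⇑f.symm) i, hinv, hinv]
      _ ≤ _ := dist_iterate_le_dynDist (hij.trans hj) _ _
  simpa using card_le_coverNum_of_pairwise f.continuous (by positivity)
    (p := fun i : Fin n => (⇑f.symm)^[i] c) fun i j hij => by
      rcases lt_or_gt_of_ne (Fin.val_injective.ne hij) with h | h
      · linarith [hsep h j.2]
      · linarith [hsep h i.2, dynDist_comm (f := f) (n := n) ((⇑f.symm)^[i] c) ((⇑f.symm)^[j] c)]

section PolyGrowth

noncomputable def polyGrowth (u : ℕ → ℕ) : EReal :=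
  atTop.limsup fun n => ((Real.log (u n) / Real.log n : ℝ) : EReal)

lemma hpol_eq_iSup_polyGrowth (f : Z → Z) :
    hpol f = ⨆ ε : {e : ℝ // 0 < e}, polyGrowth fun n => coverNum f n univ ε :=
  rfl

lemma tendsto_const_div_log (C : ℝ) : Tendsto (fun n : ℕ => C / Real.log n) atTop (𝓝 0) :=
  tendsto_const_nhds.div_atTop (Real.tendsto_log_atTop.comp tendsto_natCast_atTop_atTop)

lemma polyGrowth_le_one {u : ℕ → ℕ} {C : ℝ} (hC : 1 ≤ C)
    (h : ∀ᶠ n in atTop, (u n : ℝ) ≤ C * n) : polyGrowth u ≤ 1 := by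
  have hv : Tendsto (fun n : ℕ => ((Real.log C / Real.log n + 1 : ℝ) : EReal)) atTop (𝓝 1) := by
    simpa using EReal.tendsto_coe.2 ((tendsto_const_div_log (Real.log C)).add_const 1)
  refine (limsup_le_limsup ?_).trans hv.limsup_eq.le
  filter_upwards [h, eventually_ge_atTop 2] with n hn hn2
  have hlogn : 0 < Real.log n := Real.log_pos (by exact_mod_cast hn2)
  rw [EReal.coe_le_coe_iff, div_add_one hlogn.ne', div_le_div_iff_of_pos_right hlogn,
    ← Real.log_mul (by positivity) (by positivity)]
  rcases (u n).eq_zero_or_pos with h0 | hpos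
  · rw [h0, Nat.cast_zero, Real.log_zero]
    have hn1 : (1 : ℝ) ≤ n := by exact_mod_cast hn2.trans' one_le_two
    exact Real.log_nonneg (one_le_mul_of_one_le_of_one_le hC hn1)
  · exact Real.log_le_log (by exact_mod_cast hpos) hn

lemma one_le_polyGrowth {u : ℕ → ℕ} (h : ∀ᶠ n in atTop, n ≤ u n) : 1 ≤ polyGrowth u := by
  refine le_of_eq_of_le (limsup_const (f := atTop) (1 : EReal)).symm (limsup_le_limsup ?_)
  filter_upwards [h, eventually_ge_atTop 2] with n hn hn2
  have hlogn : 0 < Real.log n := Real.log_pos (by exact_mod_cast hn2)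
  rw [← EReal.coe_one, EReal.coe_le_coe_iff, one_le_div hlogn]
  exact Real.log_le_log (by positivity) (by exact_mod_cast hn)

lemma polyGrowth_eq_zero_of_le {u : ℕ → ℕ} {N : ℕ} (h : ∀ n, u n ≤ N) : polyGrowth u = 0 := by
  have hlim : Tendsto (fun n : ℕ => Real.log (u n) / Real.log n) atTop (𝓝 0) := by
    refine squeeze_zero' (Eventually.of_forall fun n => div_nonneg (Real.log_natCast_nonneg _)
      (Real.log_natCast_nonneg _)) ?_ (tendsto_const_div_log (Real.log N))
    filter_upwards [eventually_ge_atTop 2] with n hn2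
    have hlogn : 0 < Real.log n := Real.log_pos (by exact_mod_cast hn2)
    rcases (u n).eq_zero_or_pos with h0 | hpos
    · rw [h0, Nat.cast_zero, Real.log_zero, zero_div]
      exact div_nonneg (Real.log_natCast_nonneg N) hlogn.le
    · gcongr
      exact h n
  rw [polyGrowth, (EReal.tendsto_coe.2 hlim).limsup_eq, EReal.coe_zero]

end PolyGrowth

lemma one_le_hpol_of_not_isRecurrentPt [CompactSpace Z] (f : Z ≃ₜ Z) {c : Z}
    (hc : ¬IsRecurrentPt f.symm c) : 1 ≤ hpol f := by
  obtain ⟨ε, hε, hle⟩ := exists_forall_le_coverNum f hc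
  rw [hpol_eq_iSup_polyGrowth]
  exact le_iSup_of_le (⟨ε, hε⟩ : {e : ℝ // 0 < e}) (one_le_polyGrowth (Eventually.of_forall hle))

lemma Isometry.iterate {Y : Type*} [PseudoEMetricSpace Y] {g : Y → Y} (hg : Isometry g) :
    ∀ k, Isometry g^[k]
  | 0 => isometry_id
  | k + 1 => (Isometry.iterate hg k).comp hg

lemma exists_forall_coverNum_le_of_semiconj_isometry {Y : Type*} [MetricSpace Y] [CompactSpace Y]
    {f : Z → Z} {g : Y → Y} (hg : Isometry g) (h : Z ≃ₜ Y) (hfg : Semiconj h f g) {ε : ℝ}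
    (hε : 0 < ε) : ∃ N, ∀ n, coverNum f n univ ε ≤ N := by
  classical
  obtain ⟨δ, hδ, hclose⟩ := Metric.uniformContinuous_iff.1
    (CompactSpace.uniformContinuous_of_continuous h.symm.continuous) ε hε
  obtain ⟨t, -, ht, hcover⟩ := finite_cover_balls_of_compact (isCompact_univ (X := Y)) hδ
  refine ⟨(ht.toFinset.image h.symm).card, fun n => coverNum_le_card _ fun z _ => ?_⟩
  obtain ⟨y, hy, hzy⟩ := mem_iUnion₂.1 (hcover (mem_univ (h z)))
  refine mem_iUnion₂.2 ⟨h.symm y, Finset.mem_image_of_mem _ (ht.mem_toFinset.2 hy), ?_⟩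
  refine dynDist_le_of_forall hε.le fun k _ => ?_
  have hconj (w : Z) : f^[k] w = h.symm (g^[k] (h w)) := by
    rw [← (hfg.iterate_right k).eq, Homeomorph.symm_apply_apply]
  rw [hconj, hconj, Homeomorph.apply_symm_apply]
  refine (hclose ?_).le
  rw [(hg.iterate k).dist_eq]
  exact dist_comm (h z) y ▸ hzy

lemma hpol_eq_zero_of_semiconj_isometry {Y : Type*} [MetricSpace Y] [CompactSpace Y]
    {f : Z → Z} {g : Y → Y} (hg : Isometry g) (h : Z ≃ₜ Y) (hfg : Semiconj h f g) :
    hpol f = 0 := by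
  rw [hpol_eq_iSup_polyGrowth]
  refine (iSup_congr fun ε : {e : ℝ // 0 < e} => ?_).trans iSup_const
  obtain ⟨N, hN⟩ := exists_forall_coverNum_le_of_semiconj_isometry hg h hfg ε.2
  exact polyGrowth_eq_zero_of_le hN

section Circle

lemma coe_eq_coe_iff_exists_int {a b : ℝ} : (a : Circle1) = b ↔ ∃ k : ℤ, a = b + k := by
  rw [QuotientAddGroup.eq_iff_sub_mem, AddSubgroup.mem_zmultiples_iff]
  simp only [zsmul_eq_mul, mul_one]
  exact ⟨fun ⟨k, hk⟩ => ⟨k, by linarith⟩, fun ⟨k, hk⟩ => ⟨k, by linarith⟩⟩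

lemma dist_coe_eq (a b : ℝ) : dist (a : Circle1) b = |a - b - round (a - b)| := by
  rw [dist_eq_norm, ← AddCircle.coe_sub, UnitAddCircle.norm_eq]

lemma dist_coe_le_abs_sub (a b : ℝ) : dist (a : Circle1) b ≤ |a - b| := by
  simpa [dist_coe_eq] using round_le (a - b) 0

lemma ConjRotCircle.of_symm {f : Circle1 ≃ₜ Circle1} (hf : ConjRotCircle f.symm) :
    ConjRotCircle f := by
  obtain ⟨h, a, hconj⟩ := hf
  refine ⟨h, -a, fun x => ?_⟩
  have := hconj (h (f (h.symm x)))
  rw [Homeomorph.symm_apply_apply, Homeomorph.symm_apply_apply, Homeomorph.apply_symm_apply] at this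
  exact eq_add_neg_of_add_eq this.symm

lemma ConjRotCircle.hpol_eq_zero {f : Circle1 ≃ₜ Circle1} (hf : ConjRotCircle f) : hpol f = 0 := by
  obtain ⟨h, a, hconj⟩ := hf
  refine hpol_eq_zero_of_semiconj_isometry (isometry_add_right a) h fun z => ?_
  simpa using hconj (h z)

end Circle

section Lift

/-- `F(x + 1) - F x` is a positive integer; were it `≥ 2`, some `z ∈ (x, x + 1)` would have
`F z = F x + 1`, so `f` would identify the distinct points `z` and `x` of the circle. -/
lemma map_add_one_of_lift {f : Circle1 → Circle1} (hf : Injective f) {F : ℝ → ℝ}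
    (hFc : Continuous F) (hFm : StrictMono F) (hF : Semiconj ((↑) : ℝ → Circle1) F f) (x : ℝ) :
    F (x + 1) = F x + 1 := by
  obtain ⟨k, hk⟩ : ∃ k : ℤ, F (x + 1) = F x + k :=
    coe_eq_coe_iff_exists_int.1 (by rw [hF.eq, hF.eq, AddCircle.coe_add_period])
  have hk0 : 0 < k := by exact_mod_cast (show (0 : ℝ) < k by linarith [hFm (lt_add_one x)])
  suffices hk1 : ¬1 < k by rw [hk, show k = 1 by omega, Int.cast_one]
  intro hk1
  have hk1 : (1 : ℝ) < k := by exact_mod_cast hk1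
  obtain ⟨z, ⟨hxz, hzx⟩, hz⟩ : F x + 1 ∈ F '' Ioo x (x + 1) :=
    intermediate_value_Ioo (by linarith) hFc.continuousOn ⟨by linarith, by linarith⟩
  obtain ⟨j, hj⟩ : ∃ j : ℤ, z = x + j :=
    coe_eq_coe_iff_exists_int.1 (hf (by rw [← hF.eq, ← hF.eq, hz, AddCircle.coe_add_period]))
  have : (0 : ℤ) < j := by exact_mod_cast (show (0 : ℝ) < j by linarith)
  have : j < (1 : ℤ) := by exact_mod_cast (show (j : ℝ) < 1 by linarith)
  omega

lemma exists_lift_symm (f : Circle1 ≃ₜ Circle1) (F : CircleDeg1Lift) (hFc : Continuous F)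
    (hFm : StrictMono F) (hF : Semiconj ((↑) : ℝ → Circle1) F f) :
    ∃ G : CircleDeg1Lift, Continuous G ∧ StrictMono G ∧ Semiconj ((↑) : ℝ → Circle1) G f.symm := by
  obtain ⟨u, rfl⟩ := CircleDeg1Lift.isUnit_iff_bijective.2
    ⟨hFm.injective, F.continuous_iff_surjective.1 hFc⟩
  have hleft : LeftInverse u ↑u⁻¹ := CircleDeg1Lift.units_apply_inv_apply u
  have hright : LeftInverse ↑u⁻¹ u := CircleDeg1Lift.units_inv_apply_apply u
  refine ⟨↑u⁻¹, (CircleDeg1Lift.continuous_iff_surjective _).2 hright.surjective,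
    (CircleDeg1Lift.strictMono_iff_injective _).2 hleft.injective, fun x => ?_⟩
  rw [eq_comm, Homeomorph.symm_apply_eq, ← hF.eq, hleft x]

end Lift

section UpperBound

lemma CircleDeg1Lift.iterate_map_add_one (F : CircleDeg1Lift) (k : ℕ) (x : ℝ) :
    F^[k] (x + 1) = F^[k] x + 1 := by
  rw [← CircleDeg1Lift.coe_pow, CircleDeg1Lift.map_add_one]

section BirkhoffSum

variable (F : CircleDeg1Lift)

lemma CircleDeg1Lift.birkhoffSum_add_one (n : ℕ) (x : ℝ) :
    birkhoffSum F id n (x + 1) = birkhoffSum F id n x + n := by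
  simp [birkhoffSum, F.iterate_map_add_one, Finset.sum_add_distrib]

lemma CircleDeg1Lift.strictMono_birkhoffSum {n : ℕ} (hn : 0 < n) :
    StrictMono (birkhoffSum F id n) := fun x y hxy =>
  Finset.sum_lt_sum (fun k _ => (F.monotone.iterate k) hxy.le)
    ⟨0, Finset.mem_range.2 hn, by simpa using hxy⟩

lemma CircleDeg1Lift.continuous_birkhoffSum (hFc : Continuous F) (n : ℕ) :
    Continuous (birkhoffSum F id n) :=
  continuous_finsetSum _ fun k _ => hFc.iterate k

end BirkhoffSum

/-- The points `c j` solve `S (c j) = S 0 + j n / M` for the strictly increasing Birkhoff sum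
`S x = ∑_{k<n} F^k x`, which has `S 1 = S 0 + n`. From `c j` to any `t` of the `j`-th level,
each `F^k` with `k < n` grows by at most `S t - S (c j)`, less than one level step `n / M`. -/
lemma exists_iterate_sub_le (F : CircleDeg1Lift) (hFc : Continuous F) {n : ℕ} (hn : 0 < n)
    {M : ℕ} (hM : 0 < M) : ∃ c : Fin (M + 1) → ℝ, ∀ t ∈ Ico (0 : ℝ) 1, ∃ j,
      c j ≤ t ∧ ∀ k < n, F^[k] t - F^[k] (c j) ≤ n / M := by
  set S := birkhoffSum F id n
  have hSm : StrictMono S := F.strictMono_birkhoffSum hn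
  have hSc : Continuous S := F.continuous_birkhoffSum hFc n
  have hS1 : S 1 = S 0 + n := by simpa using F.birkhoffSum_add_one n 0
  have hstep : (0 : ℝ) < n / M := by positivity
  have hlevel (j : Fin (M + 1)) : ∃ c, S c = S 0 + j * (n / M) := by
    have hj : (j : ℝ) * (n / M) ≤ n := by
      rw [mul_div_assoc', div_le_iff₀ (by positivity), mul_comm]
      gcongr
      exact_mod_cast Nat.lt_succ_iff.1 j.2
    obtain ⟨c, -, hc⟩ := intermediate_value_Icc zero_le_one hSc.continuousOn
      (show S 0 + j * (n / M) ∈ Icc (S 0) (S 1) from ⟨by simp; positivity, by rw [hS1]; linarith⟩)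
    exact ⟨c, hc⟩
  choose c hc using hlevel
  refine ⟨c, fun t ht => ?_⟩
  set j := ⌊(S t - S 0) / (n / M)⌋₊ with hj
  have hSt : S t < S 0 + n := hS1 ▸ hSm ht.2
  have hSt0 : S 0 ≤ S t := hSm.monotone ht.1
  have hjM : j < M + 1 := by
    rw [Nat.lt_succ_iff, hj]
    refine Nat.floor_le_of_le ?_
    rw [div_le_iff₀ hstep, mul_div_cancel₀ _ (by positivity)]
    linarith
  have hlow : (j : ℝ) * (n / M) ≤ S t - S 0 :=
    (le_div_iff₀ hstep).1 (Nat.floor_le (div_nonneg (by linarith) hstep.le))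
  have hhigh : S t - S 0 < (j + 1) * (n / M) :=
    (div_lt_iff₀ hstep).1 (Nat.lt_floor_add_one _)
  have hcj : S (c ⟨j, hjM⟩) = S 0 + j * (n / M) := hc ⟨j, hjM⟩
  have hct : c ⟨j, hjM⟩ ≤ t := hSm.le_iff_le.1 (by linarith)
  refine ⟨⟨j, hjM⟩, hct, fun k hk => ?_⟩
  calc F^[k] t - F^[k] (c ⟨j, hjM⟩)
      ≤ ∑ i ∈ Finset.range n, (F^[i] t - F^[i] (c ⟨j, hjM⟩)) :=
        Finset.single_le_sum (f := fun i => F^[i] t - F^[i] (c ⟨j, hjM⟩))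
          (fun i _ => sub_nonneg.2 (F.monotone.iterate i hct)) (Finset.mem_range.2 hk)
    _ = S t - S (c ⟨j, hjM⟩) := by simp [S, birkhoffSum, Finset.sum_sub_distrib]
    _ ≤ n / M := by linarith

lemma coverNum_le_of_lift {f : Circle1 → Circle1} (F : CircleDeg1Lift) (hFc : Continuous F)
    (hF : Semiconj ((↑) : ℝ → Circle1) F f) {n : ℕ} (hn : 0 < n) {ε : ℝ} (hε : 0 < ε) :
    coverNum f n univ ε ≤ ⌈n / ε⌉₊ + 1 := by
  classical
  have hM : 0 < ⌈n / ε⌉₊ := Nat.ceil_pos.2 (by positivity)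
  obtain ⟨c, hc⟩ := exists_iterate_sub_le F hFc hn hM
  refine (coverNum_le_card (Finset.univ.image fun j => (c j : Circle1)) fun y _ => ?_).trans
    (Finset.card_image_le.trans (by simp))
  obtain ⟨z, rfl⟩ := QuotientAddGroup.mk_surjective y
  obtain ⟨j, hjt, hj⟩ := hc (Int.fract z) ⟨Int.fract_nonneg z, Int.fract_lt_one z⟩
  refine mem_iUnion₂.2 ⟨c j, Finset.mem_image_of_mem _ (Finset.mem_univ j), ?_⟩
  refine dynDist_le_of_forall hε.le fun k hk => ?_
  have hz : (QuotientAddGroup.mk z : Circle1) = (Int.fract z : ℝ) := (AddCircle.coe_fract z).symm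
  rw [hz, ← (hF.iterate_right k).eq, ← (hF.iterate_right k).eq]
  calc _ ≤ |F^[k] (c j) - F^[k] (Int.fract z)| := dist_coe_le_abs_sub _ _
    _ = F^[k] (Int.fract z) - F^[k] (c j) := by
      rw [abs_sub_comm, abs_of_nonneg (sub_nonneg.2 (F.monotone.iterate k hjt))]
    _ ≤ n / ⌈n / ε⌉₊ := hj k hk
    _ ≤ ε := by
      rw [div_le_iff₀ (by exact_mod_cast hM), ← div_le_iff₀' hε]
      exact Nat.le_ceil _

lemma hpol_le_one_of_lift {f : Circle1 → Circle1} (F : CircleDeg1Lift) (hFc : Continuous F)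
    (hF : Semiconj ((↑) : ℝ → Circle1) F f) : hpol f ≤ 1 := by
  rw [hpol_eq_iSup_polyGrowth]
  refine iSup_le fun ⟨ε, hε⟩ =>
    polyGrowth_le_one (C := 1 / ε + 2) (by linarith [one_div_pos.2 hε]) ?_
  filter_upwards [eventually_ge_atTop 1] with n hn
  have hceil : (⌈n / ε⌉₊ : ℝ) < n / ε + 1 := Nat.ceil_lt_add_one (by positivity)
  have hn1 : (1 : ℝ) ≤ n := by exact_mod_cast hn
  calc (coverNum f n univ ε : ℝ) ≤ ⌈n / ε⌉₊ + 1 := by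
        exact_mod_cast coverNum_le_of_lift F hFc hF hn hε
    _ ≤ (1 / ε + 2) * n := by
        rw [add_mul, one_div_mul_eq_div]
        linarith

end UpperBound

section Conjugacy

lemma exists_homeomorph_lift (H : CircleDeg1Lift) (hHc : Continuous H) (hHm : StrictMono H) :
    ∃ h : Circle1 ≃ₜ Circle1, Semiconj ((↑) : ℝ → Circle1) H h := by
  have hper : Periodic (fun x : ℝ => (H x : Circle1)) 1 := fun x => by
    simp only [H.map_add_one, AddCircle.coe_add_period]
  have hinj : Injective hper.lift := by
    intro u v huv
    induction u using QuotientAddGroup.induction_on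
    induction v using QuotientAddGroup.induction_on
    obtain ⟨k, hk⟩ := coe_eq_coe_iff_exists_int.1 huv
    rw [← H.map_add_int] at hk
    exact coe_eq_coe_iff_exists_int.2 ⟨k, hHm.injective hk⟩
  have hsurj : Surjective hper.lift := by
    intro y
    induction y using QuotientAddGroup.induction_on with | H z => ?_
    obtain ⟨x, rfl⟩ := (H.continuous_iff_surjective.1 hHc) z
    exact ⟨x, rfl⟩
  have hcont : Continuous hper.lift :=
    (QuotientAddGroup.isQuotientMap_mk _).continuous_iff.2 (continuous_quotient_mk'.comp hHc)
  exact ⟨hcont.homeoOfEquivCompactToT2 (f := Equiv.ofBijective _ ⟨hinj, hsurj⟩), fun _ => rfl⟩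

lemma conjRotCircle_of_semiconj {f : Circle1 ≃ₜ Circle1} {F : ℝ → ℝ}
    (hF : Semiconj ((↑) : ℝ → Circle1) F f) (H : CircleDeg1Lift) (hHc : Continuous H)
    (hHm : StrictMono H) {α : ℝ} (hH : ∀ x, H (F x) = α + H x) : ConjRotCircle f := by
  obtain ⟨h, hh⟩ := exists_homeomorph_lift H hHc hHm
  refine ⟨h, α, fun y => ?_⟩
  obtain ⟨x, hx⟩ := QuotientAddGroup.mk_surjective (h.symm y)
  rw [← hx, ← hF.eq, ← hh.eq, hH, AddCircle.coe_add, hh.eq, hx, Homeomorph.apply_symm_apply,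
    add_comm]

end Conjugacy

section Dichotomy

lemma conjRotCircle_of_pow_apply_eq_add {f : Circle1 ≃ₜ Circle1} (F : CircleDeg1Lift)
    (hFc : Continuous F) (hF : Semiconj ((↑) : ℝ → Circle1) F f) {q : ℕ} (hq : 0 < q) {p : ℤ}
    (hpq : ∀ x, (F ^ q) x = x + p) : ConjRotCircle f := by
  have hS := F.strictMono_birkhoffSum hq
  have hq' : (0 : ℝ) < q := by exact_mod_cast hq
  let H : CircleDeg1Lift :=
    ⟨⟨fun x => birkhoffSum F id q x / q, fun a b hab => div_le_div_of_nonneg_right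
      (hS.monotone hab) hq'.le⟩, fun x => by simp only [F.birkhoffSum_add_one]; field_simp⟩
  have hH (x : ℝ) : H x = birkhoffSum F id q x / q := rfl
  refine conjRotCircle_of_semiconj hF H ((F.continuous_birkhoffSum hFc q).div_const _)
    (fun a b hab => div_lt_div_of_pos_right (hS hab) hq') (α := p / q) fun x => ?_
  have := birkhoffSum_apply_sub_birkhoffSum F id q x
  rw [id, id, ← CircleDeg1Lift.coe_pow, hpq] at this
  rw [hH, hH]
  field_simp
  linarith

open Pointwise in
/-- The range of `H` is invariant under translation by `τ` and by `1`, hence by the dense group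
`ℤ τ + ℤ`; a monotone map with dense range is continuous. -/
lemma CircleDeg1Lift.continuous_of_semiconj_irrational (H F : CircleDeg1Lift)
    (hFs : Surjective F) {τ : ℝ} (hτ : Irrational τ) (hH : Semiconj H F (τ + ·)) :
    Continuous H := by
  have hclosure : AddSubgroup.closure {τ, 1} ≤ AddAction.stabilizer ℝ (range H) := by
    refine AddSubgroup.closure_le _ |>.2 <| insert_subset_iff.2 ⟨?_, singleton_subset_iff.2 ?_⟩
    · rw [SetLike.mem_coe, AddAction.mem_stabilizer_iff, Set.vadd_set_range]
      simp_rw [vadd_eq_add, ← hH.eq]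
      exact hFs.range_comp H
    · rw [SetLike.mem_coe, AddAction.mem_stabilizer_iff, Set.vadd_set_range]
      simp_rw [vadd_eq_add, add_comm (1 : ℝ), ← H.map_add_one]
      exact (add_right_surjective 1).range_comp H
  have hdense : Dense (H 0 +ᵥ (AddSubgroup.closure {τ, 1} : Set ℝ)) :=
    (dense_addSubgroupClosure_pair_iff.2 (by simpa using hτ)).vadd (H 0)
  refine H.monotone.continuous_of_denseRange (hdense.mono ?_)
  rintro _ ⟨g, hg, rfl⟩
  have := AddAction.mem_stabilizer_iff.1 (hclosure hg) ▸
    vadd_mem_vadd_set (a := g) (mem_range_self 0)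
  simpa [add_comm] using this

/-- On a flat interval `[u, v]` of `H`, the midpoint cannot come back within `(v - u) / 2`: that
would put `F^m w` in `[u + k, v + k]`, where `H = H u + k`, forcing `m τ = k`. -/
lemma not_isRecurrentPt_of_semiconj_irrational {f : Circle1 → Circle1} (F H : CircleDeg1Lift)
    (hF : Semiconj ((↑) : ℝ → Circle1) F f) {τ : ℝ} (hτ : Irrational τ)
    (hH : Semiconj H F (τ + ·)) {u v : ℝ} (huv : u < v) (hHuv : H u = H v) :
    ¬IsRecurrentPt f ((u + v) / 2 : ℝ) := by
  set w := (u + v) / 2 with hw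
  have hHw : H w = H u :=
    le_antisymm (hHuv ▸ H.mono (by linarith)) (H.mono (by linarith))
  refine not_isRecurrentPt_iff.2 ⟨(v - u) / 2, by linarith, fun m => ?_⟩
  by_contra! hclose
  rw [← (hF.iterate_right (m + 1)).eq, dist_coe_eq] at hclose
  set k := round (F^[m + 1] w - w)
  have hlow : u + k ≤ F^[m + 1] w := by linarith [(abs_lt.1 hclose).1]
  have hhigh : F^[m + 1] w ≤ v + k := by linarith [(abs_lt.1 hclose).2]
  have hHk : H (F^[m + 1] w) = H u + k := le_antisymm
    (by simpa [hHuv, H.map_add_int] using H.mono hhigh)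
    (by simpa [H.map_add_int] using H.mono hlow)
  have hm : ((m + 1 : ℕ) : ℝ) * τ = k := by
    have := (hH.iterate_right (m + 1)).eq w
    rw [add_left_iterate_apply, nsmul_eq_mul, hHk, hHw] at this
    linarith
  exact (hτ.natCast_mul (Nat.succ_ne_zero m)).ne_int k hm

lemma exists_tendsto_iterate_of_mem_Icc {α : Type*} [ConditionallyCompleteLinearOrder α]
    [TopologicalSpace α] [OrderTopology α] {G : α → α} (hG : Monotone G) {a b y : α}
    (ha : G a = a) (hb : G b = b) (hy : y ∈ Icc a b) :
    ∃ L, Tendsto (fun s => G^[s] y) atTop (𝓝 L) := by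
  have hbdd (s : ℕ) : G^[s] y ∈ Icc a b :=
    ⟨iterate_fixed ha s ▸ hG.iterate s hy.1, iterate_fixed hb s ▸ hG.iterate s hy.2⟩
  rcases le_total y (G y) with hup | hdown
  · exact ⟨_, tendsto_atTop_ciSup (hG.monotone_iterate_of_le_map hup)
      ⟨b, forall_mem_range.2 fun s => (hbdd s).2⟩⟩
  · exact ⟨_, tendsto_atTop_ciInf (hG.antitone_iterate_of_map_le hdown)
      ⟨a, forall_mem_range.2 fun s => (hbdd s).1⟩⟩

section RationalTranslationNumber

variable {f : Circle1 → Circle1} (F : CircleDeg1Lift) (hF : Semiconj ((↑) : ℝ → Circle1) F f)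
  {p : ℤ} {q : ℕ} (hq : 0 < q) (hτ : F.translationNumber = p / q)

include hF hq hτ in
/-- `F^[m + 1] y = y + k` gives `τ = k / (m + 1)`, so `(F^q)^[m + 1] y = y + (m + 1) p`, which
forces `F^q y = y + p`. -/
lemma iterate_succ_coe_ne {y : ℝ} (hy : (F ^ q) y ≠ y + p) (m : ℕ) :
    f^[m + 1] (y : Circle1) ≠ y := by
  intro hper
  rw [← (hF.iterate_right (m + 1)).eq] at hper
  obtain ⟨k, hk⟩ := coe_eq_coe_iff_exists_int.1 hper
  rw [← CircleDeg1Lift.coe_pow] at hk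
  have hkq : (p : ℝ) * (m + 1 : ℕ) = k * q := by
    have := hτ.symm.trans (F.translationNumber_of_map_pow_eq_add_int hk m.succ_pos)
    rwa [div_eq_div_iff (by positivity) (by positivity)] at this
  apply hy
  rw [← CircleDeg1Lift.iterate_pos_eq_iff _ m.succ_pos, ← CircleDeg1Lift.coe_pow, ← pow_mul,
    mul_comm, pow_mul, CircleDeg1Lift.coe_pow, CircleDeg1Lift.iterate_eq_of_map_eq_add_int _ hk]
  linarith

include hF hq hτ in
lemma not_isRecurrentPt_of_translationNumber_eq (hf : Continuous f) (hFc : Continuous F) {y : ℝ}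
    (hy : (F ^ q) y ≠ y + p) : ¬IsRecurrentPt f y := by
  set G : ℝ → ℝ := fun x => (F ^ q) x - p
  have hG : Semiconj ((↑) : ℝ → Circle1) G f^[q] := fun x => by
    rw [← (hF.iterate_right q).eq, ← CircleDeg1Lift.coe_pow]
    exact coe_eq_coe_iff_exists_int.2 ⟨-p, by push_cast; ring⟩
  obtain ⟨x₀, hx₀⟩ := (F.translationNumber_eq_rat_iff hFc hq).1 hτ
  have hfix (k : ℤ) : G (x₀ + k) = x₀ + k := by
    simp only [G, CircleDeg1Lift.map_add_int, hx₀]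
    ring
  obtain ⟨L, hL⟩ := exists_tendsto_iterate_of_mem_Icc (y := y)
    (fun a b hab => by simpa [G] using (F ^ q).mono hab)
    (hfix ⌊y - x₀⌋) (by simpa using hfix (⌊y - x₀⌋ + 1))
    ⟨by linarith [Int.floor_le (y - x₀)], by linarith [Int.lt_floor_add_one (y - x₀)]⟩
  refine not_isRecurrentPt_of_tendsto hf hq (L := (L : Circle1)) ?_
    (iterate_succ_coe_ne F hF hq hτ hy)
  exact ((continuous_quotient_mk'.tendsto L).comp hL).congr fun s => (hG.iterate_right s).eq y

end RationalTranslationNumber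

lemma conjRotCircle_or_exists_not_isRecurrentPt (f : Circle1 ≃ₜ Circle1) (F : CircleDeg1Lift)
    (hFc : Continuous F) (hFm : StrictMono F) (hF : Semiconj ((↑) : ℝ → Circle1) F f) :
    ConjRotCircle f ∨ ∃ c, ¬IsRecurrentPt f c := by
  have hFs : Surjective F := F.continuous_iff_surjective.1 hFc
  by_cases hτ : Irrational F.translationNumber
  · obtain ⟨H, hH⟩ := CircleDeg1Lift.semiconj_of_isUnit_of_translationNumber_eq
      (CircleDeg1Lift.isUnit_iff_bijective.2 ⟨hFm.injective, hFs⟩)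
      (CircleDeg1Lift.translate (Multiplicative.ofAdd F.translationNumber)).isUnit
      (CircleDeg1Lift.translationNumber_translate _).symm
    have hH' : Semiconj H F (F.translationNumber + ·) :=
      fun x => (hH.eq x).trans (CircleDeg1Lift.translate_apply _ _)
    by_cases hHm : StrictMono H
    · exact .inl <| conjRotCircle_of_semiconj hF H
        (H.continuous_of_semiconj_irrational F hFs hτ hH') hHm hH'
    · simp only [StrictMono, not_forall] at hHm
      obtain ⟨u, v, huv, hHuv⟩ := hHm
      exact .inr ⟨_, not_isRecurrentPt_of_semiconj_irrational F H hF hτ hH' huv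
        ((H.mono huv.le).eq_of_not_lt hHuv)⟩
  · obtain ⟨r, hr⟩ := not_not.1 hτ
    have hτr : F.translationNumber = r.num / r.den := by rw [← hr, Rat.cast_def]
    by_cases hall : ∀ x, (F ^ r.den) x = x + r.num
    · exact .inl (conjRotCircle_of_pow_apply_eq_add F hFc hF r.pos hall)
    · obtain ⟨y, hy⟩ := not_forall.1 hall
      exact .inr ⟨_, not_isRecurrentPt_of_translationNumber_eq F hF r.pos hτr f.continuous hFc hy⟩

end Dichotomy

/-- **Theorem (polynomial entropy of circle homeomorphisms).**
If `f` is an orientation-preserving homeomorphism of the circle (i.e. a homeomorphism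
admitting a continuous strictly increasing lift `F : ℝ → ℝ`), then `h_pol(f) ∈ {0,1}`,
and `h_pol(f) = 0` iff `f` is conjugate to a rotation. -/
theorem hpol_circle_homeo (f : Circle1 ≃ₜ Circle1)
    (F : ℝ → ℝ) (hFcont : Continuous F) (hFmono : StrictMono F)
    (hFlift : ∀ x : ℝ, f ((x : ℝ) : Circle1) = ((F x : ℝ) : Circle1)) :
    hpol (⇑f) ∈ ({0, 1} : Set EReal) ∧ (hpol (⇑f) = 0 ↔ ConjRotCircle f) := by
  have hF : Semiconj ((↑) : ℝ → Circle1) F f := fun x => (hFlift x).symm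
  obtain ⟨Φ, rfl⟩ : ∃ Φ : CircleDeg1Lift, ⇑Φ = F :=
    ⟨⟨⟨F, hFmono.monotone⟩, map_add_one_of_lift f.injective hFcont hFmono hF⟩, rfl⟩
  obtain ⟨G, hGc, hGm, hG⟩ := exists_lift_symm f Φ hFcont hFmono hF
  rcases conjRotCircle_or_exists_not_isRecurrentPt f.symm G hGc hGm hG with hconj | ⟨c, hc⟩
  · have h0 := hconj.of_symm.hpol_eq_zero
    exact ⟨h0 ▸ mem_insert _ _, iff_of_true h0 hconj.of_symm⟩
  · have h1 : hpol f = 1 :=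
      le_antisymm (hpol_le_one_of_lift Φ hFcont hF) (one_le_hpol_of_not_isRecurrentPt f hc)
    refine ⟨h1 ▸ mem_insert_of_mem _ rfl, iff_of_false (h1 ▸ one_ne_zero) fun hconj => ?_⟩
    exact one_ne_zero (h1.symm.trans hconj.hpol_eq_zero)
end

section
/- (L¹ comparison lemma) Let I = [α,β] ⊂ R and let f, g: I → R be continuous functions such that there exist 0 < m < M with m ≤ f(x) ≤ M and m ≤ g(x) ≤ M for all x ∈ I, and max(‖f−g‖_{L¹(I)}, ‖f−g‖_∞) < m. Fix x₀ ∈ I and let γ and η be the solutions of the differential equations ẋ = f(x) and ẋ = g(x) respectively, with initial conditions γ(0) = η(0) = x₀, defined on their maximal time intervals J_γ and J_η on which they take values in I. Then for all t ∈ J_γ ∩ J_η: |γ(t) − η(t)| ≤ (M/m²)·‖f−g‖_{L¹(I)}. -/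
/-!
Along a solution of `ẋ = f(x)` with `f > 0`, the time needed to travel from `x₀` to `x` is
`T_f(x) = ∫_{x₀}^x du / f(u)`, so `T_f(γ t) = t = T_g(η t)`. Since `1/f ≥ 1/M`, the map `T_f`
expands distances by at least `1/M`, whence
`|γ t - η t| ≤ M |T_f(γ t) - T_f(η t)| = M |T_g(η t) - T_f(η t)| ≤ M ∫ |1/g - 1/f|`,
and `|1/g - 1/f| ≤ |f - g| / m²` pointwise.
-/

open Set intervalIntegral MeasureTheory

theorem integral_inv_eq_sub_of_hasDerivAt {f γ : ℝ → ℝ} {J s : Set ℝ} (hJ : J.OrdConnected)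
    (hf : ContinuousOn f s) (hf0 : ∀ x ∈ s, f x ≠ 0)
    (hγ : ∀ t ∈ J, γ t ∈ s ∧ HasDerivAt γ (f (γ t)) t) {t₀ t : ℝ} (ht₀ : t₀ ∈ J) (ht : t ∈ J) :
    ∫ u in γ t₀..γ t, (f u)⁻¹ = t - t₀ := by
  have hsub : uIcc t₀ t ⊆ J := hJ.uIcc_subset ht₀ ht
  have hmaps : MapsTo γ (uIcc t₀ t) s := fun r hr => (hγ r (hsub hr)).1
  have hγc : ContinuousOn γ (uIcc t₀ t) :=
    fun r hr => (hγ r (hsub hr)).2.continuousAt.continuousWithinAt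
  have hchange := integral_comp_mul_deriv' (f' := fun r => f (γ r)) (g := fun u => (f u)⁻¹)
    (fun r hr => (hγ r (hsub hr)).2) (hf.comp hγc hmaps) ((hf.inv₀ hf0).mono hmaps.image_subset)
  have hone : EqOn (fun r => ((fun u => (f u)⁻¹) ∘ γ) r * f (γ r)) (fun _ => 1) (uIcc t₀ t) :=
    fun r hr => inv_mul_cancel₀ (hf0 _ (hmaps hr))
  rw [← hchange, integral_congr hone]
  simp

theorem mul_abs_sub_le_abs_integral {h : ℝ → ℝ} {a b c : ℝ} (hh : IntervalIntegrable h volume a b)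
    (hc : ∀ x ∈ uIcc a b, c ≤ h x) : c * |b - a| ≤ |∫ x in a..b, h x| := by
  wlog hab : a ≤ b generalizing a b
  · have := this hh.symm (by rwa [uIcc_comm]) (le_of_not_ge hab)
    rwa [abs_sub_comm, integral_symm, abs_neg]
  calc c * |b - a| = ∫ _ in a..b, c := by simp [abs_of_nonneg (sub_nonneg.2 hab), mul_comm]
    _ ≤ ∫ x in a..b, h x :=
      integral_mono_on hab intervalIntegrable_const hh fun x hx => hc x (by rwa [uIcc_of_le hab])
    _ ≤ |∫ x in a..b, h x| := le_abs_self _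

theorem abs_sub_le_mul_abs_integral_inv {f : ℝ → ℝ} {a b M : ℝ}
    (hfi : IntervalIntegrable (fun u => (f u)⁻¹) volume a b) (hpos : ∀ x ∈ uIcc a b, 0 < f x)
    (hM : ∀ x ∈ uIcc a b, f x ≤ M) : |b - a| ≤ M * |∫ u in a..b, (f u)⁻¹| := by
  have hM0 : 0 < M := (hpos a left_mem_uIcc).trans_le (hM a left_mem_uIcc)
  have := mul_abs_sub_le_abs_integral hfi fun x hx => inv_anti₀ (hpos x hx) (hM x hx)
  rwa [inv_mul_le_iff₀ hM0] at this

theorem abs_integral_le_integral_abs_of_mem_Icc {h : ℝ → ℝ} {α β x y : ℝ} (hαβ : α ≤ β)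
    (hh : ContinuousOn h (Icc α β)) (hx : x ∈ Icc α β) (hy : y ∈ Icc α β) :
    |∫ u in x..y, h u| ≤ ∫ u in α..β, |h u| := by
  have hint : IntervalIntegrable (fun u => |h u|) volume α β :=
    (hh.abs.mono (uIcc_of_le hαβ).subset).intervalIntegrable
  have hsub : uIoc x y ⊆ uIoc α β :=
    uIoc_subset_uIoc_of_uIcc_subset_uIcc (uIcc_subset_uIcc (by rwa [uIcc_of_le hαβ])
      (by rwa [uIcc_of_le hαβ]))
  calc |∫ u in x..y, h u| ≤ |∫ u in x..y, (|h u|)| := by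
        simpa only [Real.norm_eq_abs] using norm_integral_le_abs_integral_norm (f := h)
    _ ≤ |∫ u in α..β, (|h u|)| :=
      abs_integral_mono_interval hsub (Filter.Eventually.of_forall fun u => abs_nonneg (h u)) hint
    _ = ∫ u in α..β, |h u| := abs_of_nonneg (integral_nonneg hαβ fun u _ => abs_nonneg (h u))

theorem abs_inv_sub_inv_le {a b m : ℝ} (hm : 0 < m) (ha : m ≤ a) (hb : m ≤ b) :
    |a⁻¹ - b⁻¹| ≤ |b - a| / m ^ 2 := by
  rw [inv_sub_inv (hm.trans_le ha).ne' (hm.trans_le hb).ne', abs_div,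
    abs_of_pos (mul_pos (hm.trans_le ha) (hm.trans_le hb))]
  gcongr
  nlinarith

theorem integral_abs_inv_sub_inv_le {f g : ℝ → ℝ} {α β m : ℝ} (hαβ : α ≤ β)
    (hfc : ContinuousOn f (Icc α β)) (hgc : ContinuousOn g (Icc α β)) (hm : 0 < m)
    (hf : ∀ x ∈ Icc α β, m ≤ f x) (hg : ∀ x ∈ Icc α β, m ≤ g x) :
    ∫ u in α..β, |(g u)⁻¹ - (f u)⁻¹| ≤ (∫ u in α..β, |f u - g u|) / m ^ 2 := by
  have hpos : ∀ {h : ℝ → ℝ}, (∀ x ∈ Icc α β, m ≤ h x) → ∀ x ∈ Icc α β, h x ≠ 0 :=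
    fun hh x hx => (hm.trans_le (hh x hx)).ne'
  rw [← intervalIntegral.integral_div]
  refine integral_mono_on hαβ ?_ ?_ fun x hx => abs_inv_sub_inv_le hm (hg x hx) (hf x hx)
  · exact (((hgc.inv₀ (hpos hg)).sub (hfc.inv₀ (hpos hf))).abs.mono
      (uIcc_of_le hαβ).subset).intervalIntegrable
  · exact (((hfc.sub hgc).abs.div_const _).mono (uIcc_of_le hαβ).subset).intervalIntegrable

theorem L1_comparison_lemma_general (α β : ℝ) (hαβ : α ≤ β) (f g : ℝ → ℝ)
    (hfc : ContinuousOn f (Icc α β)) (hgc : ContinuousOn g (Icc α β))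
    (m M : ℝ) (hm : 0 < m)
    (hfb : ∀ x ∈ Icc α β, f x ∈ Icc m M) (hgb : ∀ x ∈ Icc α β, g x ∈ Icc m M)
    (x₀ : ℝ) (hx₀ : x₀ ∈ Icc α β)
    (Jγ Jη : Set ℝ) (hJγ : Jγ.OrdConnected) (hJη : Jη.OrdConnected)
    (h0γ : (0 : ℝ) ∈ Jγ) (h0η : (0 : ℝ) ∈ Jη)
    (γ η : ℝ → ℝ) (hγ0 : γ 0 = x₀) (hη0 : η 0 = x₀)
    (hγ : ∀ t ∈ Jγ, γ t ∈ Icc α β ∧ HasDerivAt γ (f (γ t)) t)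
    (hη : ∀ t ∈ Jη, η t ∈ Icc α β ∧ HasDerivAt η (g (η t)) t) :
    ∀ t ∈ Jγ ∩ Jη, |γ t - η t| ≤ (M / m ^ 2) * ∫ u in α..β, |f u - g u| := by
  rintro t ⟨htγ, htη⟩
  have hf0 : ∀ x ∈ Icc α β, 0 < f x := fun x hx => hm.trans_le (hfb x hx).1
  have hg0 : ∀ x ∈ Icc α β, 0 < g x := fun x hx => hm.trans_le (hgb x hx).1
  have hfi : ContinuousOn (fun u => (f u)⁻¹) (Icc α β) := hfc.inv₀ fun x hx => (hf0 x hx).ne'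
  have hgi : ContinuousOn (fun u => (g u)⁻¹) (Icc α β) := hgc.inv₀ fun x hx => (hg0 x hx).ne'
  have hint : ∀ {h : ℝ → ℝ}, ContinuousOn h (Icc α β) → ∀ {x y : ℝ}, x ∈ Icc α β → y ∈ Icc α β →
      IntervalIntegrable h volume x y :=
    fun hh _ _ hx hy => (hh.mono (uIcc_subset_Icc hx hy)).intervalIntegrable
  have hM : 0 ≤ M := (hf0 x₀ hx₀).le.trans (hfb x₀ hx₀).2
  have hγt : γ t ∈ Icc α β := (hγ t htγ).1
  have hηt : η t ∈ Icc α β := (hη t htη).1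
  have hTγ : ∫ u in x₀..γ t, (f u)⁻¹ = t := by
    simpa [hγ0] using
      integral_inv_eq_sub_of_hasDerivAt hJγ hfc (fun x hx => (hf0 x hx).ne') hγ h0γ htγ
  have hTη : ∫ u in x₀..η t, (g u)⁻¹ = t := by
    simpa [hη0] using
      integral_inv_eq_sub_of_hasDerivAt hJη hgc (fun x hx => (hg0 x hx).ne') hη h0η htη
  calc |γ t - η t| ≤ M * |∫ u in η t..γ t, (f u)⁻¹| :=
        abs_sub_le_mul_abs_integral_inv (hint hfi hηt hγt)
          (fun x hx => hf0 x (uIcc_subset_Icc hηt hγt hx))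
          fun x hx => (hfb x (uIcc_subset_Icc hηt hγt hx)).2
    _ = M * |∫ u in x₀..η t, ((g u)⁻¹ - (f u)⁻¹)| := by
      rw [← integral_interval_sub_left (hint hfi hx₀ hγt) (hint hfi hx₀ hηt),
        integral_sub (hint hgi hx₀ hηt) (hint hfi hx₀ hηt), hTγ, hTη]
    _ ≤ M * ∫ u in α..β, |(g u)⁻¹ - (f u)⁻¹| := by
      gcongr
      exact abs_integral_le_integral_abs_of_mem_Icc hαβ (hgi.sub hfi) hx₀ hηt
    _ ≤ M * ((∫ u in α..β, |f u - g u|) / m ^ 2) := by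
      gcongr
      exact integral_abs_inv_sub_inv_le hαβ hfc hgc hm (fun x hx => (hfb x hx).1)
        fun x hx => (hgb x hx).1
    _ = M / m ^ 2 * ∫ u in α..β, |f u - g u| := by ring

/-- **The `L¹` comparison lemma.** Let `f, g : [α,β] → ℝ` be continuous with
`m ≤ f, g ≤ M` on `[α,β]` (`0 < m < M`) and `max(‖f-g‖_{L¹}, ‖f-g‖_∞) < m`.
If `γ` and `η` solve `ẋ = f(x)` and `ẋ = g(x)` with `γ(0) = η(0) = x₀ ∈ [α,β]`,
staying in `[α,β]` on time intervals `Jγ` and `Jη` containing `0`, then for all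
`t ∈ Jγ ∩ Jη` one has `|γ(t) - η(t)| ≤ (M/m²)·‖f-g‖_{L¹([α,β])}`. -/
theorem L1_comparison_lemma (α β : ℝ) (hαβ : α ≤ β) (f g : ℝ → ℝ)
    (hfc : ContinuousOn f (Icc α β)) (hgc : ContinuousOn g (Icc α β))
    (m M : ℝ) (hm : 0 < m) (hmM : m < M)
    (hfb : ∀ x ∈ Icc α β, f x ∈ Icc m M) (hgb : ∀ x ∈ Icc α β, g x ∈ Icc m M)
    (hL1 : (∫ u in α..β, |f u - g u|) < m)
    (hsup : ∀ x ∈ Icc α β, |f x - g x| < m)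
    (x₀ : ℝ) (hx₀ : x₀ ∈ Icc α β)
    (Jγ Jη : Set ℝ) (hJγ : Jγ.OrdConnected) (hJη : Jη.OrdConnected)
    (h0γ : (0 : ℝ) ∈ Jγ) (h0η : (0 : ℝ) ∈ Jη)
    (γ η : ℝ → ℝ) (hγ0 : γ 0 = x₀) (hη0 : η 0 = x₀)
    (hγ : ∀ t ∈ Jγ, γ t ∈ Icc α β ∧ HasDerivAt γ (f (γ t)) t)
    (hη : ∀ t ∈ Jη, η t ∈ Icc α β ∧ HasDerivAt η (g (η t)) t) :
    ∀ t ∈ Jγ ∩ Jη, |γ t - η t| ≤ (M / m ^ 2) * ∫ u in α..β, |f u - g u| :=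
  L1_comparison_lemma_general α β hαβ f g hfc hgc m M hm hfb hgb x₀ hx₀ Jγ Jη hJγ hJη h0γ h0η γ η
    hγ0 hη0 hγ hη
end

section
/- Let X = (X₁, X₂) be a bounded Lipschitz vector field on R² with flow φ_X, satisfying μ_m := inf_{R²} X₁ > 0, and set μ_M := sup_{R²} X₁ and let κ be a Lipschitz constant of X₁. Let φ, ψ: R → R be functions with φ(x) < ψ(x) for all x, whose graphs G_φ = {(x,φ(x))} and G_ψ = {(x,ψ(x))} are orbits of φ_X. Then for every x₀ ∈ R, every T > 0, every y ∈ [φ(x₀), ψ(x₀)] and every t ∈ [0,T]: |π_x(φ_X^t(x₀, φ(x₀))) − π_x(φ_X^t(x₀, y))| ≤ (κ μ_M / μ_m²)·‖ψ − φ‖_{L¹([x₀, x₀ + μ_M T])}, where π_x: R² → R is the projection onto the first coordinate. -/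
/-!
Since `X₁ ≥ μ_m > 0`, every trajectory is the graph of a continuous function `f` over the
`x`-axis, and reparametrizing by the abscissa shows that the time it needs to travel from `x₀`
to `c` is `∫_{x₀}^{c} du / X₁(u, f u)`. By uniqueness of solutions an invariant graph cannot be
crossed, so the trajectory through `(x₀, y)` stays between the graphs of `φ` and `ψ`. Comparing
the two travel-time integrals at time `t`, the slownesses `1 / X₁` differ by at most
`κ/μ_m² · |ψ - φ|` and are bounded below by `1/μ_M`, which gives the bound.
-/

open Set intervalIntegral Filter MeasureTheory

structure IsFlowOf {E : Type*} [NormedAddCommGroup E] [NormedSpace ℝ E]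
    (X : E → E) (Φ : ℝ → E → E) : Prop where
  zero : ∀ z, Φ 0 z = z
  hasDerivAt : ∀ z t, HasDerivAt (fun s => Φ s z) (X (Φ t z)) t

namespace IsFlowOf

variable {E : Type*} [NormedAddCommGroup E] [NormedSpace ℝ E] {X : E → E} {Φ : ℝ → E → E}

theorem continuous_apply (hΦ : IsFlowOf X Φ) (z : E) : Continuous fun s => Φ s z :=
  continuous_iff_continuousAt.2 fun s => (hΦ.hasDerivAt z s).continuousAt

theorem add_apply {K : NNReal} (hX : LipschitzWith K X) (hΦ : IsFlowOf X Φ) (z : E) (s u : ℝ) :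
    Φ (s + u) z = Φ s (Φ u z) := by
  have hshift : ∀ r, HasDerivAt (fun r => Φ (r + u) z) (X (Φ (r + u) z)) r := fun r => by
    simpa [Function.comp_def] using
      (hΦ.hasDerivAt z (r + u)).scomp r ((hasDerivAt_id r).add_const u)
  have := ODE_solution_unique_univ (v := fun _ => X) (s := fun _ => univ) (t₀ := 0)
    (fun _ => hX.lipschitzOnWith) (fun r => ⟨hshift r, trivial⟩)
    (fun r => ⟨hΦ.hasDerivAt (Φ u z) r, trivial⟩) (by simp [hΦ.zero])
  exact congrFun this s

theorem neg_apply_apply {K : NNReal} (hX : LipschitzWith K X) (hΦ : IsFlowOf X Φ) (z : E)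
    (s : ℝ) : Φ (-s) (Φ s z) = z := by
  rw [← hΦ.add_apply hX, neg_add_cancel, hΦ.zero]

end IsFlowOf

section IntegralCurve

variable {X : ℝ × ℝ → ℝ × ℝ} {μm μM : ℝ} {γ : ℝ → ℝ × ℝ}

theorem continuous_inv_fst_comp_graph (hXc : Continuous X) (hμm : 0 < μm)
    (hX₁ : ∀ z, μm ≤ (X z).1) {f : ℝ → ℝ} (hf : Continuous f) :
    Continuous fun u => ((X (u, f u)).1)⁻¹ :=
  (continuous_fst.comp (hXc.comp (continuous_id.prodMk hf))).inv₀
    fun _ => (hμm.trans_le (hX₁ _)).ne'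

theorem hasDerivAt_fst_of_integralCurve (hγ : ∀ s, HasDerivAt γ (X (γ s)) s) (s : ℝ) :
    HasDerivAt (fun r => (γ r).1) (X (γ s)).1 s := by
  simpa using (hγ s).hasFDerivAt.fst.hasDerivAt

theorem continuous_fst_of_integralCurve (hγ : ∀ s, HasDerivAt γ (X (γ s)) s) :
    Continuous fun s => (γ s).1 :=
  continuous_iff_continuousAt.2 fun s => (hasDerivAt_fst_of_integralCurve hγ s).continuousAt

theorem mul_sub_le_fst_sub (hX₁ : ∀ z, μm ≤ (X z).1) (hγ : ∀ s, HasDerivAt γ (X (γ s)) s)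
    {a b : ℝ} (hab : a ≤ b) : μm * (b - a) ≤ (γ b).1 - (γ a).1 :=
  mul_sub_le_image_sub_of_le_deriv
    (fun s => (hasDerivAt_fst_of_integralCurve hγ s).differentiableAt)
    (fun s => (hasDerivAt_fst_of_integralCurve hγ s).deriv ▸ hX₁ _) hab

theorem fst_sub_le_mul_sub (hX₁ : ∀ z, (X z).1 ≤ μM) (hγ : ∀ s, HasDerivAt γ (X (γ s)) s)
    {a b : ℝ} (hab : a ≤ b) : (γ b).1 - (γ a).1 ≤ μM * (b - a) :=
  image_sub_le_mul_sub_of_deriv_le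
    (fun s => (hasDerivAt_fst_of_integralCurve hγ s).differentiableAt)
    (fun s => (hasDerivAt_fst_of_integralCurve hγ s).deriv ▸ hX₁ _) hab

theorem fst_mem_Icc_of_mem_Icc (hμm : 0 ≤ μm) (hX₁ : ∀ z, (X z).1 ∈ Icc μm μM)
    (hγ : ∀ s, HasDerivAt γ (X (γ s)) s) {t T : ℝ} (ht : t ∈ Icc 0 T) :
    (γ t).1 ∈ Icc (γ 0).1 ((γ 0).1 + μM * T) := by
  have hlow := mul_sub_le_fst_sub (fun z => (hX₁ z).1) hγ ht.1
  have hupp := fst_sub_le_mul_sub (fun z => (hX₁ z).2) hγ ht.1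
  have hμM : 0 ≤ μM := hμm.trans ((hX₁ 0).1.trans (hX₁ 0).2)
  constructor <;> nlinarith [ht.1, ht.2]

theorem fst_surjective_of_integralCurve (hμm : 0 < μm) (hX₁ : ∀ z, μm ≤ (X z).1)
    (hγ : ∀ s, HasDerivAt γ (X (γ s)) s) : Function.Surjective fun s => (γ s).1 := by
  refine (continuous_fst_of_integralCurve hγ).surjective ?_ ?_
  · refine tendsto_atTop_mono' _ ((eventually_ge_atTop 0).mono fun s hs => ?_)
      (tendsto_atTop_add_const_left _ (γ 0).1 (tendsto_id.const_mul_atTop hμm))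
    have := mul_sub_le_fst_sub hX₁ hγ hs
    simp only [id, sub_zero] at this ⊢
    linarith
  · refine tendsto_atBot_mono' _ ((eventually_le_atBot 0).mono fun s hs => ?_)
      (tendsto_atBot_add_const_left _ (γ 0).1 (tendsto_id.const_mul_atBot hμm))
    have := mul_sub_le_fst_sub hX₁ hγ hs
    simp only [id, zero_sub] at this ⊢
    linarith

theorem exists_orderIso_fst_of_integralCurve (hμm : 0 < μm) (hX₁ : ∀ z, μm ≤ (X z).1)
    (hγ : ∀ s, HasDerivAt γ (X (γ s)) s) : ∃ e : ℝ ≃o ℝ, ∀ s, e s = (γ s).1 :=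
  ⟨StrictMono.orderIsoOfSurjective _
    (strictMono_of_hasDerivAt_pos (hasDerivAt_fst_of_integralCurve hγ)
      fun _ => hμm.trans_le (hX₁ _))
    (fst_surjective_of_integralCurve hμm hX₁ hγ), fun _ => rfl⟩

theorem exists_graph_of_integralCurve (hμm : 0 < μm) (hX₁ : ∀ z, μm ≤ (X z).1)
    (hγ : ∀ s, HasDerivAt γ (X (γ s)) s) : ∃ f : ℝ → ℝ, ∀ s, (γ s).2 = f (γ s).1 := by
  obtain ⟨e, he⟩ := exists_orderIso_fst_of_integralCurve hμm hX₁ hγ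
  exact ⟨fun u => (γ (e.symm u)).2, fun s => by simp only [← he, e.symm_apply_apply]⟩

theorem continuous_of_graph_of_integralCurve (hμm : 0 < μm) (hX₁ : ∀ z, μm ≤ (X z).1)
    (hγ : ∀ s, HasDerivAt γ (X (γ s)) s) {f : ℝ → ℝ} (hf : ∀ s, (γ s).2 = f (γ s).1) :
    Continuous f := by
  obtain ⟨e, he⟩ := exists_orderIso_fst_of_integralCurve hμm hX₁ hγ
  have hfe : f = fun u => (γ (e.symm u)).2 :=
    funext fun u => by rw [hf, ← he, e.apply_symm_apply]
  rw [hfe]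
  exact continuous_snd.comp
    ((continuous_iff_continuousAt.2 fun s => (hγ s).continuousAt).comp e.symm.continuous)

theorem integral_inv_fst_of_graph_of_integralCurve (hXc : Continuous X) (hμm : 0 < μm)
    (hX₁ : ∀ z, μm ≤ (X z).1) (hγ : ∀ s, HasDerivAt γ (X (γ s)) s) {f : ℝ → ℝ}
    (hf : ∀ s, (γ s).2 = f (γ s).1) (t : ℝ) :
    ∫ u in (γ 0).1..(γ t).1, ((X (u, f u)).1)⁻¹ = t := by
  have hγc : Continuous γ := continuous_iff_continuousAt.2 fun s => (hγ s).continuousAt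
  rw [← integral_comp_mul_deriv (fun s _ => hasDerivAt_fst_of_integralCurve hγ s)
    (continuous_fst.comp (hXc.comp hγc)).continuousOn
    (continuous_inv_fst_comp_graph hXc hμm hX₁
      (continuous_of_graph_of_integralCurve hμm hX₁ hγ hf))]
  have hone : ∀ s, ((X ((γ s).1, f (γ s).1)).1)⁻¹ * (X (γ s)).1 = 1 := fun s => by
    rw [← hf, inv_mul_cancel₀ (hμm.trans_le (hX₁ _)).ne']
  simp [hone]

end IntegralCurve

def IsInvariantGraph (Φ : ℝ → ℝ × ℝ → ℝ × ℝ) (g : ℝ → ℝ) : Prop :=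
  ∀ x t, (Φ t (x, g x)).2 = g (Φ t (x, g x)).1

theorem nonneg_of_eq_zero_iff_eq_zero {F : ℝ → ℝ} (hF : Continuous F)
    (hzero : ∀ s, F s = 0 ↔ F 0 = 0) (h0 : 0 ≤ F 0) (s : ℝ) : 0 ≤ F s := by
  by_contra! hs
  rcases h0.eq_or_lt with h0 | h0
  · exact hs.ne ((hzero s).2 h0.symm)
  · obtain ⟨c, -, hc⟩ := intermediate_value_uIcc hF.continuousOn
      (show (0 : ℝ) ∈ uIcc (F 0) (F s) from mem_uIcc.2 (Or.inr ⟨hs.le, h0.le⟩))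
    exact h0.ne' ((hzero c).1 hc)

namespace IsInvariantGraph

variable {X : ℝ × ℝ → ℝ × ℝ} {K : NNReal} {Φ : ℝ → ℝ × ℝ → ℝ × ℝ} {g : ℝ → ℝ}

theorem flow_snd_eq_iff (hg : IsInvariantGraph Φ g) (hX : LipschitzWith K X)
    (hΦ : IsFlowOf X Φ) (z : ℝ × ℝ) (s : ℝ) :
    (Φ s z).2 = g (Φ s z).1 ↔ z.2 = g z.1 := by
  constructor
  · intro h
    have hp : Φ s z = ((Φ s z).1, g (Φ s z).1) := Prod.ext rfl h
    have := hg (Φ s z).1 (-s)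
    rwa [← hp, hΦ.neg_apply_apply hX] at this
  · intro h
    have hz : z = (z.1, g z.1) := Prod.ext rfl h
    rw [hz]
    exact hg z.1 s

theorem le_flow_snd (hg : IsInvariantGraph Φ g) (hgc : Continuous g) (hX : LipschitzWith K X)
    (hΦ : IsFlowOf X Φ) {z : ℝ × ℝ} (hz : g z.1 ≤ z.2) (s : ℝ) : g (Φ s z).1 ≤ (Φ s z).2 := by
  have hγ := hΦ.continuous_apply z
  have := nonneg_of_eq_zero_iff_eq_zero (F := fun r => (Φ r z).2 - g (Φ r z).1)
    ((continuous_snd.comp hγ).sub (hgc.comp (continuous_fst.comp hγ)))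
    (fun r => by simp only [sub_eq_zero, hg.flow_snd_eq_iff hX hΦ, hΦ.zero])
    (by simpa [hΦ.zero] using hz) s
  simpa using this

theorem flow_snd_le (hg : IsInvariantGraph Φ g) (hgc : Continuous g) (hX : LipschitzWith K X)
    (hΦ : IsFlowOf X Φ) {z : ℝ × ℝ} (hz : z.2 ≤ g z.1) (s : ℝ) : (Φ s z).2 ≤ g (Φ s z).1 := by
  have hγ := hΦ.continuous_apply z
  have := nonneg_of_eq_zero_iff_eq_zero (F := fun r => g (Φ r z).1 - (Φ r z).2)
    ((hgc.comp (continuous_fst.comp hγ)).sub (continuous_snd.comp hγ))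
    (fun r => by simp only [sub_eq_zero, eq_comm (a := g _), hg.flow_snd_eq_iff hX hΦ, hΦ.zero])
    (by simpa [hΦ.zero] using hz) s
  simpa using this

theorem graph_mem_uIcc_of_mem_Icc {g₁ g₂ f : ℝ → ℝ} {μm : ℝ} (hg₁ : IsInvariantGraph Φ g₁)
    (hg₂ : IsInvariantGraph Φ g₂) (hg₁c : Continuous g₁) (hg₂c : Continuous g₂)
    (hX : LipschitzWith K X) (hΦ : IsFlowOf X Φ) (hμm : 0 < μm) (hX₁ : ∀ z, μm ≤ (X z).1)
    {z : ℝ × ℝ} (hz : z.2 ∈ Icc (g₁ z.1) (g₂ z.1)) (hf : ∀ s, (Φ s z).2 = f (Φ s z).1)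
    (u : ℝ) : f u ∈ uIcc (g₁ u) (g₂ u) := by
  obtain ⟨s, rfl⟩ := fst_surjective_of_integralCurve hμm hX₁ (hΦ.hasDerivAt z) u
  rw [← hf s]
  exact mem_uIcc.2 (Or.inl
    ⟨hg₁.le_flow_snd hg₁c hX hΦ hz.1 s, hg₂.flow_snd_le hg₂c hX hΦ hz.2 s⟩)

end IsInvariantGraph

theorem inv_mul_sub_le_integral_of_integral_eq {V₁ V₂ w : ℝ → ℝ} {a c d M : ℝ}
    (hV₁ : Continuous V₁) (hV₂ : Continuous V₂) (hw : Continuous w)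
    (hV₁M : ∀ u, M⁻¹ ≤ V₁ u) (hV : ∀ u, |V₁ u - V₂ u| ≤ w u)
    (heq : ∫ u in a..c, V₁ u = ∫ u in a..d, V₂ u) (had : a ≤ d) (hdc : d ≤ c) :
    M⁻¹ * (c - d) ≤ ∫ u in a..d, w u := by
  have hsplit := integral_add_adjacent_intervals (hV₁.intervalIntegrable (μ := volume) a d)
    (hV₁.intervalIntegrable d c)
  calc M⁻¹ * (c - d) = ∫ _ in d..c, M⁻¹ := by simp [mul_comm]
    _ ≤ ∫ u in d..c, V₁ u :=
      integral_mono_on hdc (intervalIntegrable_const (μ := volume)) (hV₁.intervalIntegrable d c)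
        fun u _ => hV₁M u
    _ = ∫ u in a..d, (V₂ u - V₁ u) := by
      rw [integral_sub (hV₂.intervalIntegrable a d) (hV₁.intervalIntegrable a d)]
      linarith
    _ ≤ ∫ u in a..d, w u :=
      integral_mono_on had ((hV₂.sub hV₁).intervalIntegrable a d) (hw.intervalIntegrable a d)
        fun u _ => (le_abs_self _).trans (abs_sub_comm (V₁ u) (V₂ u) ▸ hV u)

theorem abs_sub_le_mul_integral_of_integral_eq {V₁ V₂ w : ℝ → ℝ} {a b c d M : ℝ} (hM : 0 < M)
    (hV₁ : Continuous V₁) (hV₂ : Continuous V₂) (hw : Continuous w)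
    (hV₁M : ∀ u, M⁻¹ ≤ V₁ u) (hV₂M : ∀ u, M⁻¹ ≤ V₂ u) (hV : ∀ u, |V₁ u - V₂ u| ≤ w u)
    (heq : ∫ u in a..c, V₁ u = ∫ u in a..d, V₂ u) (hc : c ∈ Icc a b) (hd : d ∈ Icc a b) :
    |c - d| ≤ M * ∫ u in a..b, w u := by
  have hmono : ∀ x ∈ Icc a b, ∫ u in a..x, w u ≤ ∫ u in a..b, w u := fun x hx =>
    integral_mono_interval le_rfl hx.1 hx.2
      (ae_of_all _ fun u => (abs_nonneg _).trans (hV u)) (hw.intervalIntegrable a b)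
  rw [← inv_mul_le_iff₀ hM]
  rcases le_total d c with hdc | hcd
  · rw [abs_of_nonneg (sub_nonneg.2 hdc)]
    exact (inv_mul_sub_le_integral_of_integral_eq hV₁ hV₂ hw hV₁M hV heq hd.1 hdc).trans
      (hmono d hd)
  · rw [abs_sub_comm, abs_of_nonneg (sub_nonneg.2 hcd)]
    exact (inv_mul_sub_le_integral_of_integral_eq hV₂ hV₁ hw hV₂M
      (fun u => abs_sub_comm (V₁ u) (V₂ u) ▸ hV u) heq.symm hc.1 hcd).trans (hmono c hc)

theorem abs_inv_sub_inv_le_of_abs_sub_le {E : Type*} [SeminormedAddCommGroup E] {F : E → ℝ}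
    {m κ : ℝ} (hm : 0 < m) (hFm : ∀ z, m ≤ F z) (hF : ∀ z z', |F z - F z'| ≤ κ * ‖z - z'‖)
    (z z' : E) : |(F z)⁻¹ - (F z')⁻¹| ≤ κ / m ^ 2 * ‖z - z'‖ := by
  have hz := hm.trans_le (hFm z)
  have hz' := hm.trans_le (hFm z')
  have hprod : m ^ 2 ≤ F z * F z' := by nlinarith [hFm z, hFm z']
  rw [inv_sub_inv hz.ne' hz'.ne', abs_div, abs_sub_comm, abs_of_pos (mul_pos hz hz'),
    div_mul_eq_mul_div]
  exact div_le_div₀ ((abs_nonneg _).trans (hF z z')) (hF z z') (by positivity) hprod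

theorem abs_inv_fst_sub_inv_fst_le {X : ℝ × ℝ → ℝ × ℝ} {μm κ : ℝ} (hμm : 0 < μm)
    (hX₁ : ∀ z, μm ≤ (X z).1) (hκ : ∀ z z' : ℝ × ℝ, |(X z).1 - (X z').1| ≤ κ * ‖z - z'‖)
    (u a b : ℝ) : |((X (u, a)).1)⁻¹ - ((X (u, b)).1)⁻¹| ≤ κ / μm ^ 2 * |a - b| := by
  simpa [Prod.norm_def] using abs_inv_sub_inv_le_of_abs_sub_le hμm hX₁ hκ (u, a) (u, b)

theorem deviation_le_L1_general (X : ℝ × ℝ → ℝ × ℝ)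
    (κ' : NNReal) (hLip : LipschitzWith κ' X)
    (μm μM : ℝ) (hμm : 0 < μm) (hX₁ : ∀ z : ℝ × ℝ, (X z).1 ∈ Icc μm μM)
    (κ : ℝ) (hκ : ∀ z z' : ℝ × ℝ, |(X z).1 - (X z').1| ≤ κ * ‖z - z'‖)
    (Φ : ℝ → ℝ × ℝ → ℝ × ℝ) (hΦ0 : ∀ z : ℝ × ℝ, Φ 0 z = z)
    (hΦ : ∀ (z : ℝ × ℝ) (t : ℝ), HasDerivAt (fun s => Φ s z) (X (Φ t z)) t)
    (φ ψ : ℝ → ℝ)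
    (hφorb : ∀ (x t : ℝ), (Φ t (x, φ x)).2 = φ ((Φ t (x, φ x)).1))
    (hψorb : ∀ (x t : ℝ), (Φ t (x, ψ x)).2 = ψ ((Φ t (x, ψ x)).1)) :
    ∀ (x₀ : ℝ) (T : ℝ), 0 < T → ∀ y ∈ Icc (φ x₀) (ψ x₀), ∀ t ∈ Icc (0 : ℝ) T,
      |(Φ t (x₀, φ x₀)).1 - (Φ t (x₀, y)).1| ≤
        (κ * μM / μm ^ 2) * ∫ u in x₀..(x₀ + μM * T), |ψ u - φ u| := by
  intro x₀ T _ y hy t ht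
  have hflow : IsFlowOf X Φ := ⟨hΦ0, hΦ⟩
  have hXc := hLip.continuous
  have hXm : ∀ z, μm ≤ (X z).1 := fun z => (hX₁ z).1
  have hμM : 0 < μM := hμm.trans_le ((hX₁ 0).1.trans (hX₁ 0).2)
  have hκ0 : 0 ≤ κ := by simpa using (abs_nonneg _).trans (hκ (1, 0) 0)
  obtain ⟨f, hf⟩ := exists_graph_of_integralCurve hμm hXm (hΦ (x₀, y))
  have hφc := continuous_of_graph_of_integralCurve hμm hXm (hΦ _) (hφorb x₀)
  have hψc := continuous_of_graph_of_integralCurve hμm hXm (hΦ _) (hψorb x₀)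
  have hf_mem := IsInvariantGraph.graph_mem_uIcc_of_mem_Icc hφorb hψorb hφc hψc hLip hflow hμm
    hXm hy hf
  have hslow : ∀ u, |((X (u, φ u)).1)⁻¹ - ((X (u, f u)).1)⁻¹| ≤ κ / μm ^ 2 * |ψ u - φ u| :=
    fun u => (abs_inv_fst_sub_inv_fst_le hμm hXm hκ u _ _).trans <|
      mul_le_mul_of_nonneg_left (abs_sub_comm (φ u) (f u) ▸ abs_sub_left_of_mem_uIcc (hf_mem u))
        (by positivity)
  have hinv : ∀ g : ℝ → ℝ, ∀ u, μM⁻¹ ≤ ((X (u, g u)).1)⁻¹ := fun g u =>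
    inv_anti₀ (hμm.trans_le (hXm _)) (hX₁ _).2
  have hc := fst_mem_Icc_of_mem_Icc hμm.le hX₁ (hΦ (x₀, φ x₀)) ht
  have hd := fst_mem_Icc_of_mem_Icc hμm.le hX₁ (hΦ (x₀, y)) ht
  have hta := integral_inv_fst_of_graph_of_integralCurve hXc hμm hXm (hΦ _) (hφorb x₀) t
  have htb := integral_inv_fst_of_graph_of_integralCurve hXc hμm hXm (hΦ _) hf t
  simp only [hΦ0] at hc hd hta htb
  have key := abs_sub_le_mul_integral_of_integral_eq hμM
    (continuous_inv_fst_comp_graph hXc hμm hXm hφc)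
    (continuous_inv_fst_comp_graph hXc hμm hXm
      (continuous_of_graph_of_integralCurve hμm hXm (hΦ _) hf))
    (by fun_prop) (hinv φ) (hinv f) hslow (hta.trans htb.symm) hc hd
  rw [intervalIntegral.integral_const_mul] at key
  calc _ ≤ _ := key
    _ = _ := by ring

/-- **Deviation of verticals (Proposition `L¹`-Deviation).**
Let `X = (X₁,X₂)` be a bounded Lipschitz vector field on `ℝ²` with flow `Φ`,
with `0 < μ_m ≤ X₁ ≤ μ_M` and `κ` a Lipschitz constant of `X₁`. Let `φ < ψ` be
functions whose graphs are orbits of the flow (equivalently, flow-invariant).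
Then for every `x₀`, `T > 0`, `y ∈ [φ(x₀), ψ(x₀)]` and `t ∈ [0,T]`, the horizontal
deviation satisfies
`|π_x(Φ^t(x₀,φ(x₀))) - π_x(Φ^t(x₀,y))| ≤ (κ μ_M/μ_m²)·‖ψ-φ‖_{L¹([x₀, x₀+μ_M T])}`. -/
theorem deviation_le_L1 (X : ℝ × ℝ → ℝ × ℝ)
    (C : ℝ) (hbd : ∀ z : ℝ × ℝ, ‖X z‖ ≤ C)
    (κ' : NNReal) (hLip : LipschitzWith κ' X)
    (μm μM : ℝ) (hμm : 0 < μm) (hX₁ : ∀ z : ℝ × ℝ, (X z).1 ∈ Icc μm μM)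
    (κ : ℝ) (hκ : ∀ z z' : ℝ × ℝ, |(X z).1 - (X z').1| ≤ κ * ‖z - z'‖)
    (Φ : ℝ → ℝ × ℝ → ℝ × ℝ) (hΦ0 : ∀ z : ℝ × ℝ, Φ 0 z = z)
    (hΦ : ∀ (z : ℝ × ℝ) (t : ℝ), HasDerivAt (fun s => Φ s z) (X (Φ t z)) t)
    (φ ψ : ℝ → ℝ) (hφψ : ∀ x : ℝ, φ x < ψ x)
    (hφorb : ∀ (x t : ℝ), (Φ t (x, φ x)).2 = φ ((Φ t (x, φ x)).1))
    (hψorb : ∀ (x t : ℝ), (Φ t (x, ψ x)).2 = ψ ((Φ t (x, ψ x)).1)) :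
    ∀ (x₀ : ℝ) (T : ℝ), 0 < T → ∀ y ∈ Icc (φ x₀) (ψ x₀), ∀ t ∈ Icc (0 : ℝ) T,
      |(Φ t (x₀, φ x₀)).1 - (Φ t (x₀, y)).1| ≤
        (κ * μM / μm ^ 2) * ∫ u in x₀..(x₀ + μM * T), |ψ u - φ u| :=
  deviation_le_L1_general X κ' hLip μm μM hμm hX₁ κ hκ Φ hΦ0 hΦ φ ψ hφorb hψorb
end

section
/- Let f: R → R be a C¹ increasing diffeomorphism. There exists a C¹ vector field X̂_f on R² of the form X̂_f(x,y) = (1, X₂(x,y)) with X₂(x+1, y) = X₂(x, y) for all (x,y) ∈ R², whose flow (φ̂_f^t)_{t∈R} is complete and satisfies φ̂_f^1(n, y) = (n+1, f(y)) for all (n, y) ∈ Z × R. -/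
/-!
Let `hᵤ = id + ρ(u) (f - id)`, with `ρ` a smooth step equal to `0` for `u ≤ 1/4` and to `1`
for `u ≥ 1/2`: an isotopy from the identity to `f` through increasing bijections with
`∂_c hᵤ > 0`. The map `Ψ(ξ, c) = (ξ, h_{fract ξ}(f^⌊ξ⌋ c))` is a bijection of the plane, and
the flow is the conjugate `Φᵗ = Ψ ∘ (· + (t, 0)) ∘ Ψ⁻¹` of the horizontal translation: the
group law is then free, and `Ψ(n, c) = (n, fⁿ c)` gives `Φ¹(n, y) = (n + 1, f y)`. The
velocity of `Φ` is `(1, X₂)` with `X₂(x, y) = ρ'(fract x) (f c - c)`, `c = h_{fract x}⁻¹ y`.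
It is `C¹` because `(u, y) ↦ hᵤ⁻¹ y` is (inverse function theorem) and `ρ'` vanishes near
the integers, where `fract` jumps.
-/

open Set Filter Topology Function
open scoped ContDiff

section InverseFunction

variable {𝕜 : Type*} [RCLike 𝕜] {E F : Type*} [NormedAddCommGroup E] [NormedSpace 𝕜 E]
  [CompleteSpace E] [NormedAddCommGroup F] [NormedSpace 𝕜 F] {n : WithTop ℕ∞}

theorem Equiv.contDiff_symm (e : E ≃ F) {e' : E → E ≃L[𝕜] F}
    (he' : ∀ a, HasFDerivAt e (e' a : E →L[𝕜] F) a) (he : ContDiff 𝕜 n e) (hn : n ≠ 0) :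
    ContDiff 𝕜 n e.symm := by
  refine contDiff_iff_contDiffAt.2 fun y => ?_
  have hC : ContDiffAt 𝕜 n e (e.symm y) := he.contDiffAt
  have hinv := hC.to_localInverse (he' _) hn
  have hright := (hC.hasStrictFDerivAt' (he' _) hn).eventually_right_inverse
  rw [e.apply_symm_apply] at hinv hright
  refine hinv.congr_of_eventuallyEq ?_
  filter_upwards [hright] with y' hy'
  conv_lhs => rw [← hy']
  exact e.symm_apply_apply _

theorem contDiff_prodShear_symm (h : E → 𝕜 ≃ 𝕜)
    (hC : ContDiff 𝕜 n fun p : E × 𝕜 => h p.1 p.2)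
    (hderiv : ∀ u c, deriv (h u) c ≠ 0) (hn : n ≠ 0) :
    ContDiff 𝕜 n fun q : E × 𝕜 => (h q.1).symm q.2 := by
  set H := fun p : E × 𝕜 => h p.1 p.2
  have hH : ∀ p, HasFDerivAt H (fderiv 𝕜 H p) p := fun p =>
    (hC.differentiable hn p).hasFDerivAt
  have hpartial : ∀ p : E × 𝕜, deriv (h p.1) p.2 = fderiv 𝕜 H p (0, 1) := fun ⟨u, c⟩ =>
    HasDerivAt.deriv (f := fun c => H (u, c))
      ((hH _).comp_hasDerivAt c ((hasDerivAt_const c u).prodMk (hasDerivAt_id c)))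
  refine contDiff_snd.comp (Equiv.contDiff_symm (Equiv.prodShear (Equiv.refl E) h)
    (e' := fun p => (ContinuousLinearEquiv.refl 𝕜 E).skewProd
      (ContinuousLinearEquiv.unitsEquivAut 𝕜 (Units.mk0 _ (hderiv p.1 p.2)))
      ((fderiv 𝕜 H p).comp (ContinuousLinearMap.inl 𝕜 E 𝕜))) (fun p => ?_)
    (contDiff_fst.prodMk hC) hn)
  refine (hasFDerivAt_fst.prodMk (hH p)).congr_fderiv (ContinuousLinearMap.ext fun x => ?_)
  have hx : x = (x.1, 0) + x.2 • ((0 : E), (1 : 𝕜)) := by ext <;> simp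
  conv_lhs => rw [hx, map_add, map_smul]
  simp [hpartial, add_comm]

end InverseFunction

noncomputable def smoothStep (u : ℝ) : ℝ := Real.smoothTransition (4 * u - 1)

theorem contDiff_smoothStep : ContDiff ℝ ∞ smoothStep :=
  Real.smoothTransition.contDiff.comp (by fun_prop)

theorem contDiff_deriv_smoothStep : ContDiff ℝ ∞ (deriv smoothStep) :=
  (contDiff_infty_iff_deriv.1 contDiff_smoothStep).2

theorem smoothStep_nonneg (u : ℝ) : 0 ≤ smoothStep u := Real.smoothTransition.nonneg _

theorem smoothStep_le_one (u : ℝ) : smoothStep u ≤ 1 := Real.smoothTransition.le_one _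

theorem smoothStep_of_le {u : ℝ} (h : u ≤ 1 / 4) : smoothStep u = 0 :=
  Real.smoothTransition.zero_of_nonpos (by linarith)

theorem smoothStep_of_ge {u : ℝ} (h : 1 / 2 ≤ u) : smoothStep u = 1 :=
  Real.smoothTransition.one_of_one_le (by linarith)

theorem deriv_smoothStep_of_notMem {u : ℝ} (h : u ∉ Icc (1 / 4) (1 / 2)) :
    deriv smoothStep u = 0 := by
  simp only [mem_Icc, not_and_or, not_le] at h
  rcases h with h | h
  · rw [(eventuallyEq_of_mem (Iio_mem_nhds h) fun _ hv => smoothStep_of_le hv.le).deriv_eq]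
    exact deriv_const u 0
  · rw [(eventuallyEq_of_mem (Ioi_mem_nhds h) fun _ hv => smoothStep_of_ge hv.le).deriv_eq]
    exact deriv_const u 1

theorem Int.floor_eq_or_eq_sub_one {n : ℤ} {x : ℝ} (h₁ : (n : ℝ) - 1 ≤ x) (h₂ : x < n + 1) :
    ⌊x⌋ = n ∨ (⌊x⌋ = n - 1 ∧ x < n) := by
  rcases le_or_gt (n : ℝ) x with h | h
  · exact Or.inl (Int.floor_eq_iff.2 ⟨h, h₂⟩)
  · exact Or.inr ⟨Int.floor_eq_iff.2 ⟨by push_cast; linarith, by push_cast; linarith⟩, h⟩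

theorem contDiff_comp_fract {E F : Type*} [NormedAddCommGroup E] [NormedSpace ℝ E]
    [NormedAddCommGroup F] [NormedSpace ℝ F] {n : WithTop ℕ∞} {G : ℝ × E → F}
    (hG : ContDiff ℝ n G) {a b : ℝ} (ha : 0 < a) (hb : b < 1)
    (hG₀ : ∀ u y, u ∉ Icc a b → G (u, y) = 0) :
    ContDiff ℝ n fun p : ℝ × E => G (Int.fract p.1, p.2) := by
  refine contDiff_iff_contDiffAt.2 fun ⟨x, y⟩ => ?_
  set m := ⌊x⌋
  have hshift : ContDiff ℝ n fun p : ℝ × E => G (p.1 - m, p.2) :=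
    hG.comp ((contDiff_fst.sub contDiff_const).prodMk contDiff_snd)
  refine hshift.contDiffAt.congr_of_eventuallyEq ?_
  have hnhds : Ioo ((m : ℝ) - 1 + b) (m + 1) ∈ 𝓝 x :=
    Ioo_mem_nhds (by linarith [Int.floor_le x]) (Int.lt_floor_add_one x)
  have hnhds' : Ioi ((m : ℝ) - 1) ∈ 𝓝 x := Ioi_mem_nhds (by linarith [Int.floor_le x])
  filter_upwards [prod_mem_nhds (inter_mem hnhds hnhds') univ_mem]
    with p ⟨⟨⟨hl, hr⟩, hl'⟩, _⟩
  rcases Int.floor_eq_or_eq_sub_one (n := m) hl'.le hr with h | ⟨h, hlt⟩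
  · simp [← Int.self_sub_floor, h]
  · have hfract : Int.fract p.1 = p.1 - m + 1 := by
      rw [← Int.self_sub_floor, h]; push_cast; ring
    rw [hG₀ (Int.fract p.1) p.2 fun hu => by linarith [hu.2],
      hG₀ (p.1 - m) p.2 fun hu => by linarith [hu.1]]

section Isotopy

variable {f : ℝ → ℝ}

variable (f) in
noncomputable def isotopy (u c : ℝ) : ℝ := c + smoothStep u * (f c - c)

theorem isotopy_of_le {u : ℝ} (hu : u ≤ 1 / 4) (c : ℝ) : isotopy f u c = c := by
  simp [isotopy, smoothStep_of_le hu]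

theorem isotopy_of_ge {u : ℝ} (hu : 1 / 2 ≤ u) (c : ℝ) : isotopy f u c = f c := by
  simp [isotopy, smoothStep_of_ge hu]

theorem strictMono_isotopy (hmono : StrictMono f) (u : ℝ) : StrictMono (isotopy f u) := by
  intro c c' hc
  have := (convex_Ioi (0 : ℝ)).add_smul_sub_mem (sub_pos.2 hc) (sub_pos.2 (hmono hc))
    ⟨smoothStep_nonneg u, smoothStep_le_one u⟩
  simp only [mem_Ioi, smul_eq_mul] at this
  simp only [isotopy]
  linarith

theorem surjective_isotopy (hmono : StrictMono f) (hsurj : Surjective f) (u : ℝ) :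
    Surjective (isotopy f u) := by
  intro y
  obtain ⟨a, rfl⟩ := hsurj y
  have hcont : Continuous (isotopy f u) := by
    have := hmono.monotone.continuous_of_surjective hsurj
    unfold isotopy; fun_prop
  have := smoothStep_nonneg u
  have := smoothStep_le_one u
  -- `isotopy f u c` lies between `c` and `f c`: apply this at `c = a` and at `c = f a`
  have hy : f a ∈ uIcc (isotopy f u a) (isotopy f u (f a)) := by
    simp only [mem_uIcc, isotopy]
    rcases le_total a (f a) with h | h
    · have := hmono.monotone h
      left; constructor <;> nlinarith
    · have := hmono.monotone h
      right; constructor <;> nlinarith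
  obtain ⟨c, -, hc⟩ := intermediate_value_uIcc hcont.continuousOn hy
  exact ⟨c, hc⟩

theorem contDiff_isotopy {n : ℕ∞} (hf : ContDiff ℝ n f) :
    ContDiff ℝ n fun p : ℝ × ℝ => isotopy f p.1 p.2 :=
  contDiff_snd.add
    (((contDiff_smoothStep.of_le (by exact_mod_cast le_top)).comp contDiff_fst).mul
      ((hf.comp contDiff_snd).sub contDiff_snd))

theorem hasDerivAt_isotopy (u : ℝ) {c f' : ℝ} (hf : HasDerivAt f f' c) :
    HasDerivAt (isotopy f u) (1 + smoothStep u * (f' - 1)) c :=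
  (hasDerivAt_id c).add ((hf.sub (hasDerivAt_id c)).const_mul _)

theorem hasDerivAt_isotopy_param (u c : ℝ) :
    HasDerivAt (fun u => isotopy f u c) (deriv smoothStep u * (f c - c)) u :=
  (((contDiff_smoothStep.differentiable (by simp)) u).hasDerivAt.mul_const _).const_add c

theorem deriv_isotopy_pos (hmono : StrictMono f) (hderiv : ∀ c, deriv f c ≠ 0) (u c : ℝ) :
    0 < deriv (isotopy f u) c := by
  have hpos : 0 < deriv f c := (hmono.monotone.deriv_nonneg).lt_of_ne (hderiv c).symm
  rw [(hasDerivAt_isotopy u (differentiableAt_of_deriv_ne_zero (hderiv c)).hasDerivAt).deriv]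
  simpa using (convex_Ioi (0 : ℝ)).add_smul_sub_mem (mem_Ioi.2 one_pos) hpos
    ⟨smoothStep_nonneg u, smoothStep_le_one u⟩

variable (hmono : StrictMono f) (hsurj : Surjective f)

noncomputable def isotopyEquiv (u : ℝ) : ℝ ≃ ℝ :=
  Equiv.ofBijective (isotopy f u)
    ⟨(strictMono_isotopy hmono u).injective, surjective_isotopy hmono hsurj u⟩

/-- The velocity `∂ᵤ hᵤ(c)` of `hᵤ = isotopy f u`, read at the point `y = hᵤ(c)`. -/
noncomputable def isotopyVelocity (q : ℝ × ℝ) : ℝ :=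
  deriv smoothStep q.1 *
    (f ((isotopyEquiv hmono hsurj q.1).symm q.2) - (isotopyEquiv hmono hsurj q.1).symm q.2)

theorem contDiff_isotopyVelocity (hf : ContDiff ℝ 1 f) (hderiv : ∀ c, deriv f c ≠ 0) :
    ContDiff ℝ 1 (isotopyVelocity hmono hsurj) := by
  have hinv := contDiff_prodShear_symm (isotopyEquiv hmono hsurj) (contDiff_isotopy hf)
    (fun u c => (deriv_isotopy_pos hmono hderiv u c).ne') one_ne_zero
  exact ((contDiff_deriv_smoothStep.of_le (by exact_mod_cast le_top)).comp contDiff_fst).mul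
    ((hf.comp hinv).sub hinv)

theorem isotopyVelocity_eq_zero {u : ℝ} (hu : u ∉ Icc (1 / 4) (1 / 2)) (y : ℝ) :
    isotopyVelocity hmono hsurj (u, y) = 0 := by
  simp [isotopyVelocity, deriv_smoothStep_of_notMem hu]

theorem isotopyVelocity_isotopy (u c : ℝ) :
    isotopyVelocity hmono hsurj (u, isotopy f u c) = deriv smoothStep u * (f c - c) := by
  have : (isotopyEquiv hmono hsurj u).symm (isotopy f u c) = c :=
    (isotopyEquiv hmono hsurj u).symm_apply_apply c
  simp only [isotopyVelocity, this]

end Isotopy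

section Suspension

variable {f : ℝ → ℝ} (hmono : StrictMono f) (hbij : Bijective f)

noncomputable def suspension : ℝ × ℝ ≃ ℝ × ℝ :=
  Equiv.prodShear (Equiv.refl ℝ) fun ξ =>
    (Equiv.ofBijective f hbij ^ ⌊ξ⌋).trans (isotopyEquiv hmono hbij.2 (Int.fract ξ))

theorem suspension_apply (p : ℝ × ℝ) : suspension hmono hbij p =
    (p.1, isotopy f (Int.fract p.1) ((Equiv.ofBijective f hbij ^ ⌊p.1⌋) p.2)) :=
  rfl

theorem suspension_intCast (n : ℤ) (c : ℝ) :
    suspension hmono hbij ((n : ℝ), c) = ((n : ℝ), (Equiv.ofBijective f hbij ^ n) c) := by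
  simp [suspension_apply, isotopy_of_le]

theorem suspension_snd_eventuallyEq (ξ c : ℝ) :
    (fun ξ' => (suspension hmono hbij (ξ', c)).2) =ᶠ[𝓝 ξ]
      fun ξ' => isotopy f (ξ' - ⌊ξ⌋) ((Equiv.ofBijective f hbij ^ ⌊ξ⌋) c) := by
  set m := ⌊ξ⌋
  have hnhds : Ioo ((m : ℝ) - 1 / 2) (m + 1) ∈ 𝓝 ξ :=
    Ioo_mem_nhds (by linarith [Int.floor_le ξ]) (Int.lt_floor_add_one ξ)
  filter_upwards [hnhds] with ξ' ⟨hl, hr⟩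
  rcases Int.floor_eq_or_eq_sub_one (n := m) (by linarith) hr with h | ⟨h, hlt⟩
  · simp [suspension_apply, ← Int.self_sub_floor, h]
  · -- just below `m` the isotopy has already reached `f`, just above it has not left the identity
    have hfract : 1 / 2 ≤ Int.fract ξ' := by
      rw [← Int.self_sub_floor, h]; push_cast; linarith
    rw [suspension_apply, isotopy_of_ge hfract, isotopy_of_le (by linarith), h]
    conv_rhs => rw [← sub_add_cancel m 1, add_comm, zpow_one_add]
    rfl

theorem hasDerivAt_suspension (ξ c : ℝ) :
    HasDerivAt (fun ξ' => suspension hmono hbij (ξ', c))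
      (1, isotopyVelocity hmono hbij.2 (Int.fract ξ, (suspension hmono hbij (ξ, c)).2)) ξ := by
  set g := (Equiv.ofBijective f hbij ^ ⌊ξ⌋) c
  have hsnd : HasDerivAt (fun ξ' => isotopy f (ξ' - ⌊ξ⌋) g)
      (deriv smoothStep (Int.fract ξ) * (f g - g)) ξ :=
    (hasDerivAt_isotopy_param (Int.fract ξ) g).comp_sub_const ξ (⌊ξ⌋ : ℝ)
  refine (hasDerivAt_id ξ).prodMk ?_
  rw [suspension_apply, isotopyVelocity_isotopy]
  exact hsnd.congr_of_eventuallyEq (suspension_snd_eventuallyEq hmono hbij ξ c)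

noncomputable def suspensionField (p : ℝ × ℝ) : ℝ :=
  isotopyVelocity hmono hbij.2 (Int.fract p.1, p.2)

theorem contDiff_suspensionField (hf : ContDiff ℝ 1 f) (hderiv : ∀ c, deriv f c ≠ 0) :
    ContDiff ℝ 1 (suspensionField hmono hbij) :=
  contDiff_comp_fract (contDiff_isotopyVelocity hmono hbij.2 hf hderiv) (by norm_num)
    (by norm_num) fun _ y hu => isotopyVelocity_eq_zero hmono hbij.2 hu y

theorem suspensionField_add_one (x y : ℝ) :
    suspensionField hmono hbij (x + 1, y) = suspensionField hmono hbij (x, y) := by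
  simp [suspensionField]

noncomputable def suspensionFlow (t : ℝ) : ℝ × ℝ ≃ ℝ × ℝ :=
  (suspension hmono hbij).symm.trans
    ((Equiv.addRight ((t, 0) : ℝ × ℝ)).trans (suspension hmono hbij))

theorem suspensionFlow_suspension (t : ℝ) (p : ℝ × ℝ) :
    suspensionFlow hmono hbij t (suspension hmono hbij p) =
      suspension hmono hbij (p.1 + t, p.2) := by
  simp [suspensionFlow, Prod.ext_iff]

theorem suspensionFlow_zero (z : ℝ × ℝ) : suspensionFlow hmono hbij 0 z = z := by
  simp [suspensionFlow, Prod.mk_zero_zero]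

theorem suspensionFlow_add (s t : ℝ) (z : ℝ × ℝ) :
    suspensionFlow hmono hbij (s + t) z =
      suspensionFlow hmono hbij s (suspensionFlow hmono hbij t z) := by
  simp [suspensionFlow, add_assoc, add_comm s]

theorem hasDerivAt_suspensionFlow (z : ℝ × ℝ) (t : ℝ) :
    HasDerivAt (fun s => suspensionFlow hmono hbij s z)
      (1, suspensionField hmono hbij (suspensionFlow hmono hbij t z)) t := by
  obtain ⟨p, rfl⟩ := (suspension hmono hbij).surjective z
  simp only [suspensionFlow_suspension]
  exact (hasDerivAt_suspension hmono hbij (p.1 + t) p.2).comp_const_add p.1 t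

theorem suspensionFlow_one_intCast (n : ℤ) (y : ℝ) :
    suspensionFlow hmono hbij 1 ((n : ℝ), y) = ((n : ℝ) + 1, f y) := by
  obtain ⟨c, rfl⟩ := (Equiv.ofBijective f hbij ^ n).surjective y
  have hcast : (n : ℝ) + 1 = ((1 + n : ℤ) : ℝ) := by push_cast; ring
  rw [← suspension_intCast hmono, suspensionFlow_suspension, hcast, suspension_intCast,
    zpow_one_add]
  rfl

end Suspension

/-- **Suspension lemma.** Given a `C¹` increasing diffeomorphism `f : ℝ → ℝ`,
there is a vector field `X̂_f(x,y) = (1, X₂(x,y))` on `ℝ²` with `X₂` `C¹` and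
1-periodic in `x`, whose flow is complete (given here by total maps `Φ^t` forming
a one-parameter group solving the ODE) and satisfies
`Φ¹(n, y) = (n+1, f(y))` for all `(n,y) ∈ ℤ × ℝ`. -/
theorem exists_suspension (f : ℝ → ℝ) (hf : ContDiff ℝ 1 f)
    (hmono : StrictMono f) (hbij : Function.Bijective f)
    (hderiv : ∀ x : ℝ, deriv f x ≠ 0) :
    ∃ X₂ : ℝ × ℝ → ℝ, ContDiff ℝ 1 X₂ ∧
      (∀ x y : ℝ, X₂ (x + 1, y) = X₂ (x, y)) ∧
      ∃ Φ : ℝ → ℝ × ℝ → ℝ × ℝ,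
        (∀ z : ℝ × ℝ, Φ 0 z = z) ∧
        (∀ s t : ℝ, ∀ z : ℝ × ℝ, Φ (s + t) z = Φ s (Φ t z)) ∧
        (∀ (z : ℝ × ℝ) (t : ℝ),
          HasDerivAt (fun s => Φ s z) ((1 : ℝ), X₂ (Φ t z)) t) ∧
        (∀ (n : ℤ) (y : ℝ), Φ 1 ((n : ℝ), y) = ((n : ℝ) + 1, f y)) :=
  ⟨suspensionField hmono hbij, contDiff_suspensionField hmono hbij hf hderiv,
    suspensionField_add_one hmono hbij, fun t => suspensionFlow hmono hbij t,
    suspensionFlow_zero hmono hbij, suspensionFlow_add hmono hbij,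
    hasDerivAt_suspensionFlow hmono hbij, suspensionFlow_one_intCast hmono hbij⟩
end
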